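/- arXiv:0706.2340 — 5 statements merged into one kernel-verified Lean document; each statement's English description precedes it below -/
import Mathlib

section
/- Let R be a commutative ring and n, a positive integers. Let M₀, M₁, …, M_{a−1} be n×n matrices over R, and let M_[a] be the an×an block matrix, with a×a array of n×n blocks indexed by 0,…,a−1, whose block in position (t+1, t) is M_t for 0 ≤ t ≤ a−2, whose block in position (0, a−1) is M_{a−1}, and all of whose other blocks are zero. Then in the polynomial ring R[T]: det(I_n − (M_{a−1}M_{a−2}⋯M₁M₀)·T^a) = det(I_{an} − M_[a]·T). -/
/-!
Induction on the number of blocks. Splitting off the first block row and column, the top-left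
block of `1 - M_[a]` is the identity, and its Schur complement is `1 - M'_[a-1]` for the family
`M' = (M₁, …, M_{a-2}, M₀ M_{a-1})` obtained by merging the first and the last matrix. The
cyclic product `M₀ M_{a-1} ⋯ M₁` of `M'` is a rotation of `M_{a-1} ⋯ M₀`, and
`det (1 - AB) = det (1 - BA)` closes the induction. The polynomial identity is the case
`M_t ↦ T • M_t`.
-/

noncomputable section

/-- The `an × an` cyclic block matrix `M_[a]`: its `n × n` block in block-position
`(t+1, t)` is `M_t` for `0 ≤ t ≤ a-2`, its block in position `(0, a-1)` is `M_{a-1}`,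
and all other blocks vanish. -/
def blockCyc {R : Type*} [CommRing R] {a n : ℕ} (M : Fin a → Matrix (Fin n) (Fin n) R) :
    Matrix (Fin a × Fin n) (Fin a × Fin n) R :=
  fun rc cc => if (rc.1 : ℕ) = ((cc.1 : ℕ) + 1) % a then M cc.1 rc.2 cc.2 else 0

open Matrix Polynomial

lemma Fin.castSucc_succ_add_one {m : ℕ} (i : Fin m) : i.castSucc.succ + 1 = i.succ.succ := by
  rw [← Fin.castSucc_succ, Fin.coeSucc_eq_succ]

lemma List.prod_map_smul {M α : Type*} [CommMonoid M] [Monoid α] [MulAction M α]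
    [IsScalarTower M α α] [SMulCommClass M α α] (c : M) (l : List α) :
    (l.map (c • ·)).prod = c ^ l.length • l.prod := by
  induction l with
  | nil => simp
  | cons x l ih =>
    rw [List.map_cons, List.prod_cons, ih, smul_mul_smul_comm, ← pow_succ', List.prod_cons,
      List.length_cons]

section blockCyc

variable {S : Type*} [CommRing S] {n : ℕ}

lemma blockCyc_apply {b : ℕ} (N : Fin (b + 1) → Matrix (Fin n) (Fin n) S)
    (t s : Fin (b + 1)) (i j : Fin n) :
    blockCyc N (t, i) (s, j) = if t = s + 1 then N s i j else 0 := by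
  simp only [blockCyc, Fin.ext_iff, Fin.val_add, Fin.val_one', Nat.add_mod_mod]

lemma blockCyc_smul {a : ℕ} (c : S) (N : Fin a → Matrix (Fin n) (Fin n) S) :
    blockCyc (fun t => c • N t) = c • blockCyc N := by
  ext ⟨t, i⟩ ⟨s, j⟩
  simp [blockCyc]

lemma blockCyc_map {R : Type*} [CommRing R] {a : ℕ} (f : R →+* S)
    (N : Fin a → Matrix (Fin n) (Fin n) R) :
    blockCyc (fun t => (N t).map f) = (blockCyc N).map f := by
  ext ⟨t, i⟩ ⟨s, j⟩
  simp [blockCyc, apply_ite f]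

lemma det_one_sub_blockCyc_succ_succ {a : ℕ} (N : Fin (a + 2) → Matrix (Fin n) (Fin n) S) :
    det (1 - blockCyc N) = det (1 - blockCyc (Fin.snoc (fun t : Fin a => N t.castSucc.succ)
      (N 0 * N (Fin.last _)) : Fin (a + 1) → Matrix (Fin n) (Fin n) S)) := by
  set N' : Fin (a + 1) → Matrix (Fin n) (Fin n) S :=
    Fin.snoc (fun t : Fin a => N t.castSucc.succ) (N 0 * N (Fin.last _))
  let e : Fin n ⊕ Fin (a + 1) × Fin n ≃ Fin (a + 2) × Fin n :=
    (((finSuccEquiv (a + 1)).prodCongr (Equiv.refl _)).trans optionProdEquiv).symm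
  let B : Matrix (Fin n) (Fin (a + 1) × Fin n) S :=
    -of fun i q => if q.1 = Fin.last a then N (Fin.last _) i q.2 else 0
  let C : Matrix (Fin (a + 1) × Fin n) (Fin n) S :=
    -of fun p j => if p.1 = 0 then N 0 p.2 j else 0
  have hCB : ∀ t s i j, (C * B) (t, i) (s, j) =
      if t = 0 ∧ s = Fin.last a then (N 0 * N (Fin.last _)) i j else 0 := by
    intro t s i j
    by_cases ht : t = 0 <;> by_cases hs : s = Fin.last a <;>
      simp [C, B, mul_apply, ht, hs]
  have hblocks : (1 - blockCyc N).submatrix e e = fromBlocks 1 B C (1 - blockCyc N' + C * B) := by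
    ext (i | ⟨t, i⟩) (j | ⟨s, j⟩)
    · simp [e, blockCyc_apply, one_apply]
    · induction s using Fin.lastCases <;>
        simp [e, B, blockCyc_apply, one_apply, Fin.castSucc_succ_add_one, (Fin.succ_ne_zero _).symm]
    · simp [e, C, blockCyc_apply, one_apply, ← Fin.succ_zero_eq_one, -Fin.succ_zero_eq_one']
    · induction s using Fin.lastCases <;>
        simp [e, N', hCB, blockCyc_apply, one_apply, Fin.castSucc_succ_add_one]
  rw [← det_submatrix_equiv_self e, hblocks, det_fromBlocks_one₁₁, add_sub_cancel_right]

lemma det_one_sub_blockCyc :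
    ∀ {a : ℕ} (N : Fin (a + 1) → Matrix (Fin n) (Fin n) S),
      det (1 - blockCyc N) = det (1 - (List.ofFn N).reverse.prod)
  | 0, N => by
    rw [← det_submatrix_equiv_self (Equiv.uniqueProd (Fin n) (Fin 1)).symm]
    congr 1
    ext i j
    simp [blockCyc_apply, one_apply]
  | a + 1, N => by
    rw [det_one_sub_blockCyc_succ_succ, det_one_sub_blockCyc, List.ofFn_succ', List.ofFn_succ,
      List.ofFn_succ']
    simp only [Fin.snoc_castSucc, Fin.snoc_last, Fin.succ_last, List.concat_eq_append,
      List.reverse_append, List.reverse_cons, List.reverse_nil, List.prod_append,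
      List.prod_singleton, List.prod_nil, one_mul]
    rw [mul_assoc, det_one_sub_mul_comm]

end blockCyc

theorem stmt_7_general {R : Type*} [CommRing R] (a n : ℕ) (ha : 0 < a)
    (M : Fin a → Matrix (Fin n) (Fin n) R) :
    Matrix.det ((1 : Matrix (Fin n) (Fin n) (Polynomial R))
        - ((Polynomial.X : Polynomial R) ^ a) • (((List.ofFn fun t => M t).reverse.prod).map Polynomial.C))
      = Matrix.det ((1 : Matrix (Fin a × Fin n) (Fin a × Fin n) (Polynomial R))
        - (Polynomial.X : Polynomial R) • ((blockCyc M).map Polynomial.C)) := by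
  obtain ⟨b, rfl⟩ := Nat.exists_eq_add_one_of_ne_zero ha.ne'
  have hprod : (List.ofFn fun t => (X : R[X]) • (M t).map C).reverse.prod
      = (X : R[X]) ^ (b + 1) • (List.ofFn M).reverse.prod.map (C : R →+* R[X]) := by
    have hmap : (List.ofFn fun t => (X : R[X]) • (M t).map C)
        = ((List.ofFn M).map (C : R →+* R[X]).mapMatrix).map ((X : R[X]) • ·) := by
      simp [List.map_ofFn, Function.comp_def]
    rw [hmap, ← List.map_reverse, List.prod_map_smul, ← List.map_reverse, ← map_list_prod]
    simp
  rw [← blockCyc_map, ← blockCyc_smul, det_one_sub_blockCyc, hprod]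

/-- **Lemma 2.1 (transfer lemma for nuclear/finite matrices).**
For `n × n` matrices `M₀, …, M_{a-1}` over a commutative ring `R`,
`det(I_n - (M_{a-1} ⋯ M₁M₀)·T^a) = det(I_{an} - M_[a]·T)` in `R[T]`. -/
theorem stmt_7 {R : Type*} [CommRing R] (a n : ℕ) (ha : 0 < a) (hn : 0 < n)
    (M : Fin a → Matrix (Fin n) (Fin n) R) :
    Matrix.det ((1 : Matrix (Fin n) (Fin n) (Polynomial R))
        - ((Polynomial.X : Polynomial R) ^ a) • (((List.ofFn fun t => M t).reverse.prod).map Polynomial.C))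
      = Matrix.det ((1 : Matrix (Fin a × Fin n) (Fin a × Fin n) (Polynomial R))
        - (Polynomial.X : Polynomial R) • ((blockCyc M).map Polynomial.C)) :=
  stmt_7_general a n ha M

end
end

section
/- Let K be a field equipped with a valuation v : K → ℝ ∪ {+∞}, and let a, n, k be positive integers with k ≤ n. Let M₀, …, M_{a−1} be n×n matrices over K, and let c_k be the coefficient of T^k in det(I_n − (M_{a−1}⋯M₁M₀)·T) ∈ K[T]. Then v(c_k) ≥ Σ_{t=0}^{a−1} min_{W_t} v(det W_t), where for each t the minimum ranges over all k×k submatrices W_t of M_t (obtained by selecting any k rows and any k columns of M_t). -/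
/-!
Expanding `det (1 - X • P)` row by row, the coefficient of `X ^ k` is `(-1) ^ k` times the sum
of the principal `k × k` minors of `P = M_{a-1} ⋯ M₀`. By Cauchy–Binet, a `k × k` minor of a
product `A * B` is a sum of products of a `k × k` minor of `A` with a `k × k` minor of `B`, so
by induction on the number of factors, and the ultrametric inequality, every `k × k` minor of
`P` has valuation at least `∑ₜ min v (det Wₜ)`. Since `v ((-1) ^ k) ≥ 0`, the same bound holds
for the coefficient.
-/

noncomputable section

open Finset Matrix Polynomial

theorem EReal.nonneg_of_add_self_eq_self {x : EReal} (hx : x ≠ ⊥) (h : x + x = x) : 0 ≤ x := by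
  induction x using EReal.rec with
  | bot => exact absurd rfl hx
  | coe r => norm_cast at h ⊢; linarith
  | top => exact le_top

theorem EReal.nonneg_of_nonneg_add_self {x : EReal} (hx : x ≠ ⊥) (h : 0 ≤ x + x) : 0 ≤ x := by
  induction x using EReal.rec with
  | bot => exact absurd rfl hx
  | coe r => norm_cast at h ⊢; linarith
  | top => exact le_top

structure IsERealValuation {K : Type*} [Ring K] (v : K → EReal) : Prop where
  map_eq_top_iff : ∀ x, v x = ⊤ ↔ x = 0
  map_mul : ∀ x y, v (x * y) = v x + v y
  min_le_map_add : ∀ x y, min (v x) (v y) ≤ v (x + y)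

namespace IsERealValuation

variable {K : Type*} [Ring K] {v : K → EReal} (hv : IsERealValuation v)
include hv

theorem map_zero : v 0 = ⊤ := (hv.map_eq_top_iff 0).mpr rfl

theorem map_ne_bot (x : K) : v x ≠ ⊥ := by
  intro hx
  have h := hv.map_mul 0 x
  rw [zero_mul, hv.map_zero, hx, EReal.add_bot] at h
  exact top_ne_bot h

theorem zero_le_map_one : 0 ≤ v 1 :=
  EReal.nonneg_of_add_self_eq_self (hv.map_ne_bot 1) (by rw [← hv.map_mul, one_mul])

theorem zero_le_map_neg_one : 0 ≤ v (-1) :=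
  EReal.nonneg_of_nonneg_add_self (hv.map_ne_bot _)
    (by rw [← hv.map_mul, neg_mul_neg, one_mul]; exact hv.zero_le_map_one)

theorem le_map_sum {ι : Type*} (s : Finset ι) (f : ι → K) {c : EReal}
    (h : ∀ i ∈ s, c ≤ v (f i)) : c ≤ v (∑ i ∈ s, f i) := by
  induction s using Finset.cons_induction with
  | empty => simp [hv.map_zero]
  | cons i s hi ih =>
    rw [sum_cons]
    exact (le_min (h i (mem_cons_self i s)) (ih fun j hj => h j (mem_cons_of_mem hj))).trans
      (hv.min_le_map_add _ _)

def integers : Subring K where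
  carrier := {x | 0 ≤ v x}
  mul_mem' {x y} hx hy := by
    change 0 ≤ v (x * y)
    exact hv.map_mul x y ▸ add_nonneg hx hy
  one_mem' := hv.zero_le_map_one
  add_mem' {x y} hx hy := (le_min hx hy).trans (hv.min_le_map_add x y)
  zero_mem' := by simp [hv.map_zero]
  neg_mem' {x} hx := by
    change 0 ≤ v (-x)
    exact neg_one_mul x ▸ hv.map_mul (-1) x ▸ add_nonneg hv.zero_le_map_neg_one hx

end IsERealValuation

theorem Subring.det_mem {R : Type*} [CommRing R] {n : Type*} [Fintype n] [DecidableEq n]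
    (S : Subring R) (A : Matrix n n R) (hA : ∀ i j, A i j ∈ S) : A.det ∈ S := by
  have hA' : A = (Matrix.of fun i j => (⟨A i j, hA i j⟩ : S)).map S.subtype := rfl
  rw [hA', ← RingHom.mapMatrix_apply, ← RingHom.map_det]
  exact SetLike.coe_mem _

section CauchyBinet

variable {R : Type*} [CommRing R] {n : Type*} [Fintype n] {k : ℕ}

theorem Matrix.det_mul_eq_sum_det_submatrix_mul_prod (A : Matrix (Fin k) n R)
    (B : Matrix n (Fin k) R) :
    det (A * B) = ∑ p : Fin k → n, det (A.submatrix id p) * ∏ i, B (p i) i := by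
  simp only [det_apply', mul_apply, prod_univ_sum, Fintype.piFinset_univ, mul_sum, sum_mul,
    submatrix_apply, id, prod_mul_distrib, mul_assoc]
  exact sum_comm

/-- An injective `p : Fin k → n` factors uniquely as the increasing enumeration of its image
composed with a permutation. -/
theorem Finset.sum_eq_sum_orderEmbOfFin_comp_perm [LinearOrder n] {M : Type*} [AddCommMonoid M]
    (F : (Fin k → n) → M) (hF : ∀ p, ¬ Function.Injective p → F p = 0) :
    ∑ p, F p = ∑ s : {s : Finset n // s.card = k}, ∑ σ : Equiv.Perm (Fin k),
      F (s.1.orderEmbOfFin s.2 ∘ σ) := by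
  rw [← Fintype.sum_prod_type']
  symm
  refine sum_bij_ne_zero (fun sσ _ _ => sσ.1.1.orderEmbOfFin sσ.1.2 ∘ sσ.2)
    (fun _ _ _ => mem_univ _) ?_ ?_ (fun _ _ _ => rfl)
  · rintro ⟨⟨s, hs⟩, σ⟩ - - ⟨⟨t, ht⟩, τ⟩ - - h
    have hst : s = t := by
      have hrange := congrArg Set.range h
      dsimp only at hrange
      rwa [σ.surjective.range_comp, τ.surjective.range_comp, range_orderEmbOfFin,
        range_orderEmbOfFin, coe_inj] at hrange
    subst hst
    have hστ : σ = τ := Equiv.ext fun i => (s.orderEmbOfFin hs).injective (congrFun h i)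
    rw [hστ]
  · intro p _ hp
    have hinj : Function.Injective p := by_contra fun h => hp (hF p h)
    set s := univ.map ⟨p, hinj⟩
    have hs : s.card = k := by simp [s]
    have hmem : ∀ i, p i ∈ s := fun i => mem_map_of_mem _ (mem_univ i)
    let σ : Equiv.Perm (Fin k) :=
      Equiv.ofBijective (fun i => (s.orderIsoOfFin hs).symm ⟨p i, hmem i⟩)
        (Finite.injective_iff_bijective.mp fun i j h => hinj (by simpa using h))
    have hσ : s.orderEmbOfFin hs ∘ σ = p := funext fun i => by
      simp [σ, ← coe_orderIsoOfFin_apply]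
    exact ⟨(⟨s, hs⟩, σ), mem_univ _, hσ ▸ hp, hσ⟩

theorem Matrix.det_mul_eq_sum_det_submatrix_mul_det_submatrix [LinearOrder n]
    (A : Matrix (Fin k) n R) (B : Matrix n (Fin k) R) :
    det (A * B) = ∑ s : {s : Finset n // s.card = k},
      det (A.submatrix id (s.1.orderEmbOfFin s.2)) *
        det (B.submatrix (s.1.orderEmbOfFin s.2) id) := by
  rw [det_mul_eq_sum_det_submatrix_mul_prod, sum_eq_sum_orderEmbOfFin_comp_perm]
  · refine sum_congr rfl fun s _ => ?_
    set e := s.1.orderEmbOfFin s.2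
    rw [det_apply' (B.submatrix e id), mul_sum]
    refine sum_congr rfl fun σ _ => ?_
    rw [show A.submatrix id (e ∘ σ) = (A.submatrix id e).submatrix id σ from rfl, det_permute']
    simp only [submatrix_apply, id, Function.comp_apply]
    ring
  · intro p hp
    obtain ⟨i, j, hij, hne⟩ := Function.not_injective_iff.mp hp
    rw [det_zero_of_column_eq hne fun l => by simp [hij], zero_mul]

theorem Matrix.det_submatrix_mul_eq_sum_det_submatrix_mul_det_submatrix [LinearOrder n]
    {m : Type*} (A : Matrix m n R) (B : Matrix n m R) (ρ γ : Fin k → m) :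
    det ((A * B).submatrix ρ γ) = ∑ s : {s : Finset n // s.card = k},
      det (A.submatrix ρ (s.1.orderEmbOfFin s.2)) * det (B.submatrix (s.1.orderEmbOfFin s.2) γ) := by
  rw [submatrix_mul _ _ _ id _ Function.bijective_id,
    det_mul_eq_sum_det_submatrix_mul_det_submatrix]
  rfl

end CauchyBinet

theorem Matrix.coeff_charpolyRev_eq_sum_minors {R : Type*} [CommRing R] {n : Type*} [Fintype n]
    [DecidableEq n] (M : Matrix n n R) (k : ℕ) :
    M.charpolyRev.coeff k =
      (-1) ^ k * ∑ s ∈ univ.powersetCard k, (M.submatrix (Subtype.val : s → n) Subtype.val).det := by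
  have h : M.charpolyRev = det (1 + (X : R[X]) • (-M).map C) := by
    rw [charpolyRev, sub_eq_add_neg, Matrix.map_neg C (map_neg C) M, smul_neg]
  rw [h, coeff_det_one_add_X_smul_eq_sum_minors, mul_sum]
  refine sum_congr rfl fun s hs => ?_
  simp only [submatrix_neg, Pi.neg_apply, det_neg, Fintype.card_coe, (mem_powersetCard.mp hs).2]

theorem Matrix.det_submatrix_subtype_val_eq {R : Type*} [CommRing R] {n : Type*} [DecidableEq n]
    [LinearOrder n] (M : Matrix n n R) (s : Finset n) {k : ℕ} (hs : s.card = k) :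
    (M.submatrix (Subtype.val : s → n) Subtype.val).det =
      (M.submatrix (s.orderEmbOfFin hs) (s.orderEmbOfFin hs)).det := by
  rw [← det_submatrix_equiv_self (s.orderIsoOfFin hs).toEquiv]
  rfl

def minorValuation {K : Type*} [CommRing K] {n : Type*} (v : K → EReal) (k : ℕ)
    (A : Matrix n n K) : EReal :=
  ⨅ (ρ : Fin k ↪ n) (γ : Fin k ↪ n), v (A.submatrix ρ γ).det

namespace IsERealValuation

variable {K : Type*} [CommRing K] {v : K → EReal} (hv : IsERealValuation v)
  {n : Type*} [Fintype n] [DecidableEq n] [LinearOrder n] {k : ℕ}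
include hv

theorem sum_minorValuation_le_map_det_submatrix_prod (L : List (Matrix n n K))
    (ρ γ : Fin k ↪ n) :
    (L.map (minorValuation v k)).sum ≤ v (L.prod.submatrix ρ γ).det := by
  induction L generalizing ρ γ with
  | nil =>
    refine hv.integers.det_mem _ fun i j => ?_
    rw [List.prod_nil, submatrix_apply, one_apply]
    split_ifs
    exacts [one_mem _, zero_mem _]
  | cons A L ih =>
    rw [List.map_cons, List.sum_cons, List.prod_cons,
      det_submatrix_mul_eq_sum_det_submatrix_mul_det_submatrix]
    refine hv.le_map_sum _ _ fun s _ => ?_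
    rw [hv.map_mul]
    exact add_le_add (iInf₂_le _ _) (ih (s.1.orderEmbOfFin s.2).toEmbedding γ)

theorem le_map_coeff_charpolyRev (P : Matrix n n K) {c : EReal}
    (h : ∀ ρ : Fin k ↪ n, c ≤ v (P.submatrix ρ ρ).det) : c ≤ v (P.charpolyRev.coeff k) := by
  rw [coeff_charpolyRev_eq_sum_minors, hv.map_mul, ← zero_add c]
  refine add_le_add (hv.integers.pow_mem (hv.integers.neg_mem hv.integers.one_mem) k)
    (hv.le_map_sum _ _ fun s hs => ?_)
  rw [det_submatrix_subtype_val_eq P s (mem_powersetCard.mp hs).2]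
  exact h _

end IsERealValuation

theorem stmt_8_general {K : Type*} [Field K] (v : K → EReal)
    (hv0 : ∀ x, v x = ⊤ ↔ x = 0)
    (hvmul : ∀ x y, v (x * y) = v x + v y)
    (hvadd : ∀ x y, min (v x) (v y) ≤ v (x + y))
    (a n k : ℕ)
    (M : Fin a → Matrix (Fin n) (Fin n) K) :
    ∑ t : Fin a, ⨅ (ρ : Fin k ↪ Fin n) (γ : Fin k ↪ Fin n), v (((M t).submatrix ρ γ).det)
      ≤ v (Polynomial.coeff
            (Matrix.det ((1 : Matrix (Fin n) (Fin n) (Polynomial K))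
              - (Polynomial.X : Polynomial K) •
                  (((List.ofFn fun t => M t).reverse.prod).map Polynomial.C))) k) := by
  have hv : IsERealValuation v := ⟨hv0, hvmul, hvadd⟩
  refine hv.le_map_coeff_charpolyRev _ fun ρ => ?_
  have h := hv.sum_minorValuation_le_map_det_submatrix_prod (List.ofFn M).reverse ρ ρ
  rwa [List.map_reverse, List.sum_reverse, List.map_ofFn, List.sum_ofFn] at h

/-- **Lemma 2.2.**  Let `K` be a field with a (non-archimedean, additive) valuation `v`,
and let `M₀, …, M_{a-1}` be `n × n` matrices over `K`.  If `c_k` is the coefficient of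
`T^k` in `det(I_n - (M_{a-1} ⋯ M₁M₀)·T)`, then
`v(c_k) ≥ ∑_{t=0}^{a-1} min_{W_t} v(det W_t)`, the minimum ranging over all `k × k`
submatrices `W_t` of `M_t` (any `k` rows and any `k` columns). -/
theorem stmt_8 {K : Type*} [Field K] (v : K → EReal)
    (hv0 : ∀ x, v x = ⊤ ↔ x = 0)
    (hvmul : ∀ x y, v (x * y) = v x + v y)
    (hvadd : ∀ x y, min (v x) (v y) ≤ v (x + y))
    (a n k : ℕ) (ha : 0 < a) (hn : 0 < n) (hk : 0 < k) (hkn : k ≤ n)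
    (M : Fin a → Matrix (Fin n) (Fin n) K) :
    ∑ t : Fin a, ⨅ (ρ : Fin k ↪ Fin n) (γ : Fin k ↪ Fin n), v (((M t).submatrix ρ γ).det)
      ≤ v (Polynomial.coeff
            (Matrix.det ((1 : Matrix (Fin n) (Fin n) (Polynomial K))
              - (Polynomial.X : Polynomial K) •
                  (((List.ofFn fun t => M t).reverse.prod).map Polynomial.C))) k) :=
  stmt_8_general v hv0 hvmul hvadd a n k M

end
end

section
/- Let p be a prime, s ≥ 1 with p ∤ s, and d₁, d₂ ≥ 1. For 0 ≤ k ≤ s(d₁+d₂), let HS(k) be the sum of the k smallest elements (with multiplicity) of the Hodge–Stickelberger slope multiset and HP(k) the sum of the k smallest elements of the Hodge slope multiset {0,1} ∪ {j/(sd₁) : 1 ≤ j ≤ sd₁−1} ∪ {j/(sd₂) : 1 ≤ j ≤ sd₂−1}. Then: (i) HS(k) ≥ HP(k) for all 0 ≤ k ≤ s(d₁+d₂); (ii) HS(0) = HP(0) = 0 and HS(s(d₁+d₂)) = HP(s(d₁+d₂)) = s(d₁+d₂)/2 (the two polygons share endpoints); and (iii) HS(k) = HP(k) for all k if and only if p ≡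 1 (mod s). -/
open scoped Classical

noncomputable section

abbrev Qbar : Type := AlgebraicClosure ℚ

/-- Exponential of a power series with zero constant term (truncated sum is exact). -/
noncomputable def myExp (f : PowerSeries Qbar) : PowerSeries Qbar :=
  PowerSeries.mk fun k =>
    ∑ n ∈ Finset.range (k + 1), PowerSeries.coeff k (f ^ n) * ((n.factorial : Qbar))⁻¹

/-- The L-series `exp (∑_{k ≥ 1} S k · T^k / k)` attached to a sequence of sums. -/
noncomputable def Lser (S : ℕ → Qbar) : PowerSeries Qbar :=
  myExp (PowerSeries.mk fun k => if k = 0 then 0 else S k * ((k : Qbar))⁻¹)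

/-- The additive character ψ(y) = ζ^(Tr_{F/𝔽_p}(y)) of the Galois field with p^n elements. -/
noncomputable def psi (p : ℕ) [Fact p.Prime] (n : ℕ) (ζ : Qbar) (y : GaloisField p n) : Qbar :=
  ζ ^ (Algebra.trace (ZMod p) (GaloisField p n) y).val

/-- Evaluation at `x^t` of the Laurent polynomial `∑_{i=-d₂}^{d₁} ac i · X^i`. -/
noncomputable def laurentEval (p : ℕ) [Fact p.Prime] (n d₁ d₂ t : ℕ)
    (ac : ℤ → GaloisField p n) (x : (GaloisField p n)ˣ) : GaloisField p n :=
  ∑ i ∈ Finset.Icc (-(d₂ : ℤ)) (d₁ : ℤ),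
    ac i * ((x ^ ((t : ℤ) * i) : (GaloisField p n)ˣ) : GaloisField p n)

/-- Twisted exponential sum `∑_{x ∈ F^×} ψ(P(x^t)) · χ(x)`. -/
noncomputable def expSum (p : ℕ) [Fact p.Prime] (n d₁ d₂ t : ℕ) (ζ : Qbar)
    (ac : ℤ → GaloisField p n) (χ : (GaloisField p n)ˣ → Qbar) : Qbar :=
  ∑ᶠ x : (GaloisField p n)ˣ, psi p n ζ (laurentEval p n d₁ d₂ t ac x) * χ x

/-- The family of exponential sums `S_k(P̄(x^s))`, for `P̄` with coefficients `aco` over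
`𝔽_q = GaloisField p m`, evaluated over `𝔽_{q^k}` via the embeddings `ι`. -/
noncomputable def SfunPow (p : ℕ) [Fact p.Prime] (m d₁ d₂ s : ℕ) (ζ : Qbar)
    (aco : ℤ → GaloisField p m)
    (ι : (k : ℕ) → GaloisField p m →+* GaloisField p (m * (k + 1))) : ℕ → Qbar
  | 0 => 0
  | (k + 1) => expSum p (m * (k + 1)) d₁ d₂ s ζ (fun i => ι k (aco i)) (fun _ => 1)

/-- Norm map relative to an embedding of Galois fields. -/
noncomputable def normTo (p : ℕ) [Fact p.Prime] (m n : ℕ)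
    (ι : GaloisField p m →+* GaloisField p n) (x : GaloisField p n) : GaloisField p m :=
  letI := ι.toAlgebra
  Algebra.norm (GaloisField p m) x

/-- The family of twisted exponential sums `S_k(P̄, χ_s^r)`, where `χ_s = χ ∘ N` on each level. -/
noncomputable def SfunTw (p : ℕ) [Fact p.Prime] (m d₁ d₂ r : ℕ) (ζ : Qbar)
    (aco : ℤ → GaloisField p m)
    (ι : (k : ℕ) → GaloisField p m →+* GaloisField p (m * (k + 1)))
    (χ : MulChar (GaloisField p m) Qbar) : ℕ → Qbar
  | 0 => 0
  | (k + 1) => expSum p (m * (k + 1)) d₁ d₂ 1 ζ (fun i => ι k (aco i))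
      (fun x => (χ (normTo p m (m * (k + 1)) (ι k) (x : GaloisField p (m * (k + 1))))) ^ r)

/-- The orbit of `r` under multiplication by `ν` on `ℤ/s`. -/
noncomputable def orb (s ν : ℕ) (r : ZMod s) : Finset (ZMod s) :=
  Finset.image (fun t => (ν : ZMod s) ^ t * r) (Finset.range (s + 1))

/-- λ of the orbit of `r`: `(∑_{j ∈ orbit} j) / (s · ℓ)`. -/
noncomputable def lam (s ν : ℕ) (r : ZMod s) : ℚ :=
  (∑ j ∈ orb s ν r, (j.val : ℚ)) / ((s : ℚ) * (orb s ν r).card)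

/-- Slope multiset of the Hodge–Stickelberger polygon `HS(𝔸_{d₁,d₂}, ν, s)`. -/
noncomputable def HSslopes (d₁ d₂ s ν : ℕ) : Multiset ℚ :=
  (Multiset.range s).bind fun r =>
    (Multiset.range d₁).map (fun m => ((m : ℚ) + 1 - lam s ν (r : ZMod s)) / d₁)
      + (Multiset.range d₂).map (fun m => ((m : ℚ) + lam s ν (r : ZMod s)) / d₂)

/-- Slope multiset of the twisted Hodge–Stickelberger polygon `HS(𝔸_{d₁,d₂}, ν, χ_s^r)`. -/
noncomputable def HSrslopes (d₁ d₂ s ν : ℕ) (r : ZMod s) : Multiset ℚ :=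
  (Multiset.range d₁).map (fun m => ((m : ℚ) + 1 - lam s ν r) / d₁)
    + (Multiset.range d₂).map (fun m => ((m : ℚ) + lam s ν r) / d₂)

/-- Sum of the `k` smallest elements of a multiset of rationals. -/
noncomputable def partialSum (M : Multiset ℚ) (k : ℕ) : ℚ :=
  ((M.sort (· ≤ ·)).take k).sum

/-- Linear interpolation at abscissa `k` between the points `(i, y i)` and `(j, y j)`. -/
noncomputable def interp (y : ℕ → EReal) (k i j : ℕ) : EReal :=
  if i = j then y k
  else (((((j : ℝ) - (k : ℝ)) / ((j : ℝ) - (i : ℝ))) : ℝ) : EReal) * y i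
      + (((((k : ℝ) - (i : ℝ)) / ((j : ℝ) - (i : ℝ))) : ℝ) : EReal) * y j

/-- Height at integer abscissa `k` of the lower convex hull (Newton polygon) of the points
`(i, y i)`, `0 ≤ i ≤ N`. -/
noncomputable def NPheight (y : ℕ → EReal) (N k : ℕ) : EReal :=
  ⨅ c ∈ Finset.range (k + 1) ×ˢ Finset.Icc k N, interp y k c.1 c.2

/-- A (non-archimedean, additive) valuation on `ℚ̄` extending the `p`-adic valuation,
normalized by `v p = 1`. -/
structure PadicVal (p : ℕ) where
  v : Qbar → EReal
  zero_iff : ∀ x, v x = ⊤ ↔ x = 0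
  vmul : ∀ x y, v (x * y) = v x + v y
  vadd : ∀ x y, min (v x) (v y) ≤ v (x + y)
  vp : v (p : Qbar) = 1


/-- Coercion ℚ → EReal. -/
noncomputable def qe (x : ℚ) : EReal := ((x : ℝ) : EReal)


/-- Slope multiset of the Hodge polygon `HP(𝔸_{sd₁,sd₂})`. -/
noncomputable def HPslopes (s d₁ d₂ : ℕ) : Multiset ℚ :=
  ({0, 1} : Multiset ℚ)
    + (Multiset.range (s * d₁ - 1)).map (fun j => ((j : ℚ) + 1) / ((s : ℚ) * d₁))
    + (Multiset.range (s * d₂ - 1)).map (fun j => ((j : ℚ) + 1) / ((s : ℚ) * d₂))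

/-!
The Hodge slope multiset is the Hodge–Stickelberger multiset for `ν = 1`, where every orbit is a
single residue and `λ(r) = r/s`. The `k`-th partial sum of a multiset `M` of size `≥ k` is
`max_c (k c - ∑_{x ∈ M} (c - x)⁺)`, so `HS ≥ HP` follows once `∑ φ` over the `HS` slopes is at
most `∑ φ` over the `HP` slopes for the convex hinge functions `φ = (c - ·)⁺`. For convex `φ`
the contribution of a residue `r` is a convex function of `λ(r)`, and `λ` of an orbit is the mean
of `j/s` over it, so Jensen's inequality on each orbit gives this. If the polygons coincide, so do
the multisets, and Jensen's equality case for the strictly convex `φ = x²` forces `j/s` to be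
constant on every orbit; since the orbit of `1` contains `p`, this gives `p ≡ 1 (mod s)`.
-/

def shortfall (M : Multiset ℚ) (c : ℚ) : ℚ :=
  (M.map fun x => max (c - x) 0).sum

lemma sum_map_const_sub (l : List ℚ) (c : ℚ) :
    (l.map fun x => c - x).sum = l.length * c - l.sum := by
  induction l with
  | nil => simp
  | cons a l ih => simp only [List.map_cons, List.sum_cons, ih, List.length_cons]; push_cast; ring

section PartialSum

variable {M N : Multiset ℚ} {k : ℕ}

lemma shortfall_eq_sum_sort (M : Multiset ℚ) (c : ℚ) :
    shortfall M c = ((M.sort (· ≤ ·)).map fun x => max (c - x) 0).sum := by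
  conv_lhs => rw [shortfall, ← Multiset.sort_eq M (· ≤ ·)]
  rw [Multiset.map_coe, Multiset.sum_coe]

lemma mul_sub_shortfall_le_partialSum (hk : k ≤ Multiset.card M) (c : ℚ) :
    k * c - shortfall M c ≤ partialSum M k := by
  set l := M.sort (· ≤ ·)
  have hlen : (l.take k).length = k := by simp [l, hk]
  have htake : k * c - partialSum M k = ((l.take k).map fun x => c - x).sum := by
    rw [sum_map_const_sub, hlen, partialSum]
  have hhinge : ((l.take k).map fun x => c - x).sum
      ≤ ((l.take k).map fun x => max (c - x) 0).sum :=
    List.sum_le_sum fun x _ => le_max_left _ _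
  have hsub : ((l.take k).map fun x => max (c - x) 0).sum ≤ shortfall M c := by
    rw [shortfall_eq_sum_sort]
    exact ((List.take_sublist k l).map _).sum_le_sum fun x hx => by
      obtain ⟨y, -, rfl⟩ := List.mem_map.mp hx
      exact le_max_right _ _
  linarith

lemma partialSum_eq_mul_sub_shortfall (hk : k ≤ Multiset.card M) {c : ℚ}
    (hlo : ∀ x ∈ (M.sort (· ≤ ·)).take k, x ≤ c) (hhi : ∀ x ∈ (M.sort (· ≤ ·)).drop k, c ≤ x) :
    partialSum M k = k * c - shortfall M c := by
  rw [shortfall_eq_sum_sort]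
  set l := M.sort (· ≤ ·)
  have hlen : (l.take k).length = k := by simp [l, hk]
  have hdrop : ((l.drop k).map fun x => max (c - x) 0).sum = 0 :=
    List.sum_eq_zero fun y hy => by
      obtain ⟨x, hx, rfl⟩ := List.mem_map.mp hy
      exact max_eq_right (sub_nonpos.mpr (hhi x hx))
  have htake : ((l.take k).map fun x => max (c - x) 0) = (l.take k).map fun x => c - x :=
    List.map_congr_left fun x hx => max_eq_left (sub_nonneg.mpr (hlo x hx))
  rw [← List.take_append_drop k l, List.map_append, List.sum_append,
    hdrop, htake, add_zero, sum_map_const_sub, hlen, partialSum]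
  ring

lemma exists_sort_take_le_le_sort_drop (M : Multiset ℚ) (k : ℕ) :
    ∃ c, (∀ x ∈ (M.sort (· ≤ ·)).take k, x ≤ c) ∧ ∀ x ∈ (M.sort (· ≤ ·)).drop k, c ≤ x := by
  set l := M.sort (· ≤ ·)
  have hsorted : (l.take k ++ l.drop k).Pairwise (· ≤ ·) := by
    rw [List.take_append_drop]; exact M.pairwise_sort _
  rw [List.pairwise_append] at hsorted
  rcases hd : l.drop k with _ | ⟨a, t⟩
  · obtain ⟨c, hc⟩ := l.finite_toSet.bddAbove
    exact ⟨c, fun x hx => hc (List.mem_of_mem_take hx), by simp⟩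
  · rw [hd] at hsorted
    refine ⟨a, fun x hx => hsorted.2.2 x hx a List.mem_cons_self, fun x hx => ?_⟩
    rcases List.mem_cons.mp hx with rfl | hx
    · exact le_rfl
    · exact (List.pairwise_cons.mp hsorted.2.1).1 x hx

lemma partialSum_le_of_shortfall_le (hcard : Multiset.card M = Multiset.card N)
    (h : ∀ c, shortfall N c ≤ shortfall M c) (hk : k ≤ Multiset.card M) :
    partialSum M k ≤ partialSum N k := by
  obtain ⟨c, hlo, hhi⟩ := exists_sort_take_le_le_sort_drop M k
  rw [partialSum_eq_mul_sub_shortfall hk hlo hhi]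
  linarith [h c, mul_sub_shortfall_le_partialSum (hcard ▸ hk) c]

lemma partialSum_card (M : Multiset ℚ) : partialSum M (Multiset.card M) = M.sum := by
  rw [partialSum, ← Multiset.length_sort (· ≤ ·), List.take_length, ← Multiset.sum_coe,
    Multiset.sort_eq]

lemma eq_of_partialSum_eq (hcard : Multiset.card M = Multiset.card N)
    (h : ∀ k ≤ Multiset.card M, partialSum M k = partialSum N k) : M = N := by
  rw [← Multiset.sort_eq M (· ≤ ·), ← Multiset.sort_eq N (· ≤ ·)]
  congr 1
  refine List.ext_getElem (by simp [hcard]) fun n hM hN => ?_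
  have hn : n < Multiset.card M := by simpa using hM
  have hn₀ := h n hn.le
  have hn₁ := h (n + 1) hn
  rw [partialSum, partialSum] at hn₀ hn₁
  rw [List.sum_take_succ _ _ hM, List.sum_take_succ _ _ hN, hn₀] at hn₁
  exact add_left_cancel hn₁

end PartialSum

section Convexity

open Set

variable {𝕜 : Type*} [Field 𝕜] [LinearOrder 𝕜] [IsStrictOrderedRing 𝕜] {φ : 𝕜 → 𝕜}

lemma affine_combo (α β x y a b : 𝕜) (hab : a + b = 1) :
    α + β * (a • x + b • y) = a • (α + β * x) + b • (α + β * y) := by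
  simp only [smul_eq_mul]
  linear_combination α * hab.symm

lemma ConvexOn.comp_add_mul (hφ : ConvexOn 𝕜 univ φ) (α β : 𝕜) :
    ConvexOn 𝕜 univ fun x => φ (α + β * x) :=
  ⟨convex_univ, fun x _ y _ a b ha hb hab => by
    simpa only [affine_combo α β x y a b hab] using hφ.2 trivial trivial ha hb hab⟩

lemma StrictConvexOn.comp_add_mul (hφ : StrictConvexOn 𝕜 univ φ) (α : 𝕜) {β : 𝕜} (hβ : β ≠ 0) :
    StrictConvexOn 𝕜 univ fun x => φ (α + β * x) :=
  ⟨convex_univ, fun x _ y _ hxy a b ha hb hab => by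
    have hne : α + β * x ≠ α + β * y := fun h => hxy (mul_left_cancel₀ hβ (add_left_cancel h))
    simpa only [affine_combo α β x y a b hab] using hφ.2 trivial trivial hne ha hb hab⟩

lemma strictConvexOn_sq : StrictConvexOn 𝕜 univ fun x : 𝕜 => x ^ 2 :=
  ⟨convex_univ, fun x _ y _ hxy a b ha hb hab => by
    have hpos : 0 < a * b * (x - y) ^ 2 := by
      have := sub_ne_zero.mpr hxy
      positivity
    have key : a * x ^ 2 + b * y ^ 2 - (a * x + b * y) ^ 2 = a * b * (x - y) ^ 2 := by
      linear_combination (-(a * x ^ 2 + b * y ^ 2)) * hab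
    simp only [smul_eq_mul]
    linarith⟩

variable {ι : Type*} {s : Set 𝕜} {f : ι → 𝕜 → 𝕜}

lemma convexOn_finset_sum {t : Finset ι} (h : ∀ i ∈ t, ConvexOn 𝕜 s (f i)) (hs : Convex 𝕜 s) :
    ConvexOn 𝕜 s fun x => ∑ i ∈ t, f i x := by
  classical
  induction t using Finset.induction_on with
  | empty => simpa using convexOn_const 0 hs
  | insert i t hi ih =>
    simp only [Finset.sum_insert hi]
    exact (h i (Finset.mem_insert_self i t)).add (ih fun j hj => h j (Finset.mem_insert_of_mem hj))

lemma strictConvexOn_finset_sum {t : Finset ι} (ht : t.Nonempty)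
    (h : ∀ i ∈ t, StrictConvexOn 𝕜 s (f i)) : StrictConvexOn 𝕜 s fun x => ∑ i ∈ t, f i x := by
  classical
  induction ht using Finset.Nonempty.cons_induction with
  | singleton i => simpa using h i (Finset.mem_singleton_self i)
  | cons i t hi ht ih =>
    simp only [Finset.sum_cons]
    exact (h i (Finset.mem_cons_self i t)).add (ih fun j hj => h j (Finset.mem_cons_of_mem hj))

end Convexity

def slopeBlock (d₁ d₂ : ℕ) (L : ℚ) : Multiset ℚ :=
  (Multiset.range d₁).map (fun m : ℕ => ((m : ℚ) + 1 - L) / d₁)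
    + (Multiset.range d₂).map (fun m : ℕ => ((m : ℚ) + L) / d₂)

section SlopeBlock

open Set

variable {d₁ d₂ : ℕ} {φ : ℚ → ℚ}

lemma sum_map_slopeBlock (φ : ℚ → ℚ) (L : ℚ) :
    ((slopeBlock d₁ d₂ L).map φ).sum
      = ∑ m ∈ Finset.range d₁, φ (((m : ℚ) + 1 - L) / d₁)
        + ∑ m ∈ Finset.range d₂, φ (((m : ℚ) + L) / d₂) := by
  simp [slopeBlock, Multiset.map_map, Finset.sum]

lemma card_slopeBlock (L : ℚ) : Multiset.card (slopeBlock d₁ d₂ L) = d₁ + d₂ := by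
  simp [slopeBlock]

lemma sum_slopeBlock (hd₁ : d₁ ≠ 0) (hd₂ : d₂ ≠ 0) (L : ℚ) :
    (slopeBlock d₁ d₂ L).sum = ((d₁ : ℚ) + d₂) / 2 := by
  have h := sum_map_slopeBlock (d₁ := d₁) (d₂ := d₂) id L
  rw [Multiset.map_id] at h
  simp only [id] at h
  rw [h, ← Finset.sum_div, ← Finset.sum_div, Finset.sum_sub_distrib, Finset.sum_add_distrib,
    Finset.sum_add_distrib]
  have gauss (n : ℕ) : ∑ m ∈ Finset.range n, (m : ℚ) = n * (n - 1) / 2 := by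
    induction n with
    | zero => simp
    | succ n ih => rw [Finset.sum_range_succ, ih]; push_cast; ring
  simp only [gauss, Finset.sum_const, Finset.card_range, nsmul_eq_mul]
  field_simp
  ring

lemma convexOn_sum_map_slopeBlock (hφ : ConvexOn ℚ univ φ) :
    ConvexOn ℚ univ fun L => ((slopeBlock d₁ d₂ L).map φ).sum := by
  simp only [sum_map_slopeBlock]
  refine (convexOn_finset_sum (fun m _ => ?_) convex_univ).add
    (convexOn_finset_sum (fun m _ => ?_) convex_univ)
  · exact (hφ.comp_add_mul (((m : ℚ) + 1) / d₁) (-1 / d₁)).congr fun L _ => congrArg φ (by ring)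
  · exact (hφ.comp_add_mul ((m : ℚ) / d₂) (1 / d₂)).congr fun L _ => congrArg φ (by ring)

lemma strictConvexOn_sum_map_slopeBlock (hφ : StrictConvexOn ℚ univ φ) (hd₁ : d₁ ≠ 0) :
    StrictConvexOn ℚ univ fun L => ((slopeBlock d₁ d₂ L).map φ).sum := by
  have hβ : (-1 / d₁ : ℚ) ≠ 0 := by simp [hd₁]
  simp only [sum_map_slopeBlock]
  refine (strictConvexOn_finset_sum (Finset.nonempty_range_iff.mpr hd₁) fun m _ => ?_).add_convexOn
    (convexOn_finset_sum (fun m _ => ?_) convex_univ)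
  · exact (hφ.comp_add_mul (((m : ℚ) + 1) / d₁) hβ).congr fun L _ => congrArg φ (by ring)
  · exact (hφ.convexOn.comp_add_mul ((m : ℚ) / d₂) (1 / d₂)).congr fun L _ =>
      congrArg φ (by ring)

end SlopeBlock

section Orbit

open Finset Set

variable {s ν : ℕ} {Φ : ℚ → ℚ}

lemma mem_orb_self (r : ZMod s) : r ∈ orb s ν r :=
  Finset.mem_image.mpr ⟨0, by simp, by simp⟩

lemma lam_eq_sum_smul (r : ZMod s) :
    lam s ν r = ∑ j ∈ orb s ν r, ((orb s ν r).card : ℚ)⁻¹ • ((j.val : ℚ) / s) := by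
  rw [lam, ← smul_sum, ← sum_div, smul_eq_mul]
  ring

lemma card_orb_pos (r : ZMod s) : 0 < (orb s ν r).card :=
  card_pos.mpr ⟨r, mem_orb_self r⟩

lemma sum_inv_card_orb (r : ZMod s) : ∑ _j ∈ orb s ν r, ((orb s ν r).card : ℚ)⁻¹ = 1 := by
  rw [sum_const, nsmul_eq_mul, mul_inv_cancel₀]
  exact_mod_cast (card_orb_pos r).ne'

lemma map_lam_le_average (hΦ : ConvexOn ℚ univ Φ) (r : ZMod s) :
    Φ (lam s ν r) ≤ ∑ j ∈ orb s ν r, ((orb s ν r).card : ℚ)⁻¹ • Φ ((j.val : ℚ) / s) := by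
  rw [lam_eq_sum_smul]
  exact hΦ.map_sum_le (fun _ _ => by positivity) (sum_inv_card_orb r) fun _ _ => trivial

variable [NeZero s]

lemma natCast_mul_mem_orb (r : ZMod s) : (ν : ZMod s) * r ∈ orb s ν r :=
  Finset.mem_image.mpr ⟨1, by simp [NeZero.pos s], by simp⟩

lemma exists_pow_eq_one (hν : IsUnit (ν : ZMod s)) :
    ∃ N, 0 < N ∧ N ≤ s ∧ (ν : ZMod s) ^ N = 1 := by
  obtain ⟨u, hu⟩ := hν
  refine ⟨orderOf u, orderOf_pos u, ?_, ?_⟩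
  · calc orderOf u ≤ Fintype.card (ZMod s)ˣ := orderOf_le_card_univ
      _ = s.totient := ZMod.card_units_eq_totient s
      _ ≤ s := Nat.totient_le s
  · rw [← hu, ← Units.val_pow_eq_pow_val, pow_orderOf_eq_one, Units.val_one]

lemma mem_orb_iff (hν : IsUnit (ν : ZMod s)) {r r' : ZMod s} :
    r' ∈ orb s ν r ↔ ∃ n : ℕ, (ν : ZMod s) ^ n * r = r' := by
  refine ⟨fun h => ?_, fun ⟨n, hn⟩ => ?_⟩
  · obtain ⟨t, -, ht⟩ := Finset.mem_image.mp h
    exact ⟨t, ht⟩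
  · obtain ⟨N, hN, hNs, hνN⟩ := exists_pow_eq_one hν
    refine Finset.mem_image.mpr ⟨n % N, Finset.mem_range.mpr ?_, ?_⟩
    · have := Nat.mod_lt n hN
      omega
    · rw [← hn, ← pow_eq_pow_mod n hνN]

lemma mem_orb_symm (hν : IsUnit (ν : ZMod s)) {r r' : ZMod s} (h : r' ∈ orb s ν r) :
    r ∈ orb s ν r' := by
  obtain ⟨n, rfl⟩ := (mem_orb_iff hν).mp h
  obtain ⟨N, hN, -, hνN⟩ := exists_pow_eq_one hν
  refine (mem_orb_iff hν).mpr ⟨(N - 1) * n, ?_⟩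
  rw [← mul_assoc, ← pow_add, ← Nat.succ_mul, Nat.succ_eq_add_one, Nat.sub_add_cancel hN, pow_mul,
    hνN, one_pow, one_mul]

lemma orb_eq_of_mem (hν : IsUnit (ν : ZMod s)) {r r' : ZMod s} (h : r' ∈ orb s ν r) :
    orb s ν r' = orb s ν r := by
  obtain ⟨n, rfl⟩ := (mem_orb_iff hν).mp h
  obtain ⟨m, hm⟩ := (mem_orb_iff hν).mp (mem_orb_symm hν h)
  ext x
  simp only [mem_orb_iff hν]
  constructor
  · rintro ⟨a, rfl⟩
    exact ⟨a + n, by rw [pow_add, mul_assoc]⟩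
  · rintro ⟨a, rfl⟩
    exact ⟨a + m, by rw [pow_add, mul_assoc, hm]⟩

lemma sum_eq_sum_orb_average (hν : IsUnit (ν : ZMod s)) (F : ZMod s → ℚ) :
    ∑ r, F r = ∑ r, ∑ j ∈ orb s ν r, ((orb s ν r).card : ℚ)⁻¹ • F j := by
  calc ∑ r, F r = ∑ j, ∑ _r ∈ orb s ν j, ((orb s ν j).card : ℚ)⁻¹ • F j := by
        simp_rw [← sum_smul, sum_inv_card_orb, one_smul]
    _ = ∑ r, ∑ j ∈ orb s ν r, ((orb s ν j).card : ℚ)⁻¹ • F j :=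
        sum_comm' fun j r => ⟨fun h => ⟨mem_orb_symm hν h.2, mem_univ r⟩,
          fun h => ⟨mem_univ j, mem_orb_symm hν h.1⟩⟩
    _ = _ := sum_congr rfl fun r _ => sum_congr rfl fun j hj => by rw [orb_eq_of_mem hν hj]

lemma lam_one (r : ZMod s) : lam s 1 r = (r.val : ℚ) / s := by
  have horb : orb s 1 r = {r} := by
    simp only [orb, Nat.cast_one, one_pow, one_mul]
    exact image_const nonempty_range_add_one r
  simp [lam, horb]

lemma sum_map_lam_le (hν : IsUnit (ν : ZMod s)) (hΦ : ConvexOn ℚ univ Φ) :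
    ∑ r, Φ (lam s ν r) ≤ ∑ r : ZMod s, Φ ((r.val : ℚ) / s) := by
  rw [sum_eq_sum_orb_average hν fun r => Φ ((r.val : ℚ) / s)]
  exact sum_le_sum fun r _ => map_lam_le_average hΦ r

lemma natCast_eq_one_of_sum_map_lam_eq (hν : IsUnit (ν : ZMod s)) (hΦ : StrictConvexOn ℚ univ Φ)
    (h : ∑ r, Φ (lam s ν r) = ∑ r : ZMod s, Φ ((r.val : ℚ) / s)) : (ν : ZMod s) = 1 := by
  rw [sum_eq_sum_orb_average hν fun r => Φ ((r.val : ℚ) / s)] at h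
  have h₁ := (sum_eq_sum_iff_of_le fun r _ => map_lam_le_average hΦ.convexOn r).mp h 1
    (mem_univ 1)
  have hw : ∀ j ∈ orb s ν 1, (0 : ℚ) < ((orb s ν 1).card : ℚ)⁻¹ := fun _ _ => by
    have := card_orb_pos (ν := ν) (1 : ZMod s)
    positivity
  rw [lam_eq_sum_smul, hΦ.map_sum_eq_iff hw (sum_inv_card_orb 1) fun _ _ => trivial] at h₁
  have hval := (h₁ _ (natCast_mul_mem_orb 1)).trans (h₁ _ (mem_orb_self 1)).symm
  rw [mul_one, div_left_inj' (by exact_mod_cast NeZero.ne s)] at hval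
  exact ZMod.val_injective s (by exact_mod_cast hval)

end Orbit

section HodgeStickelberger

open Set

variable {d₁ d₂ s ν : ℕ} {φ : ℚ → ℚ}

lemma HSslopes_eq_bind :
    HSslopes d₁ d₂ s ν = (Multiset.range s).bind fun r => slopeBlock d₁ d₂ (lam s ν r) := by
  simp [HSslopes, slopeBlock, Multiset.pure_def, Multiset.bind_def, Multiset.map_map]

lemma HSslopes_congr {ν' : ℕ} (h : (ν : ZMod s) = ν') :
    HSslopes d₁ d₂ s ν = HSslopes d₁ d₂ s ν' := by
  simp only [HSslopes, lam, orb, h]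

lemma card_HSslopes : Multiset.card (HSslopes d₁ d₂ s ν) = s * (d₁ + d₂) := by
  simp [HSslopes_eq_bind, card_slopeBlock]

lemma sum_HSslopes (hd₁ : d₁ ≠ 0) (hd₂ : d₂ ≠ 0) :
    (HSslopes d₁ d₂ s ν).sum = s * ((d₁ : ℚ) + d₂) / 2 := by
  simp only [HSslopes_eq_bind, Multiset.sum_bind, sum_slopeBlock hd₁ hd₂, Multiset.map_const',
    Multiset.card_range, Multiset.sum_replicate, nsmul_eq_mul]
  ring

lemma sum_range_natCast_eq_sum_univ [NeZero s] (g : ZMod s → ℚ) :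
    ∑ r ∈ Finset.range s, g r = ∑ r : ZMod s, g r :=
  Finset.sum_nbij' (↑) ZMod.val (by simp) (by simp [ZMod.val_lt])
    (fun r hr => ZMod.val_cast_of_lt (Finset.mem_range.mp hr)) (fun r _ => ZMod.natCast_zmod_val r)
    fun _ _ => rfl

lemma sum_map_HSslopes [NeZero s] (φ : ℚ → ℚ) :
    ((HSslopes d₁ d₂ s ν).map φ).sum
      = ∑ r : ZMod s, ((slopeBlock d₁ d₂ (lam s ν r)).map φ).sum := by
  rw [HSslopes_eq_bind, Multiset.map_bind, Multiset.sum_bind, ← sum_range_natCast_eq_sum_univ,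
    Finset.sum, Finset.range_val]

lemma sum_map_HSslopes_le [NeZero s] (hν : IsUnit (ν : ZMod s)) (hφ : ConvexOn ℚ univ φ) :
    ((HSslopes d₁ d₂ s ν).map φ).sum ≤ ((HSslopes d₁ d₂ s 1).map φ).sum := by
  simp only [sum_map_HSslopes, lam_one]
  exact sum_map_lam_le (Φ := fun L => ((slopeBlock d₁ d₂ L).map φ).sum) hν
    (convexOn_sum_map_slopeBlock hφ)

lemma natCast_eq_one_of_sum_map_HSslopes_eq [NeZero s] (hν : IsUnit (ν : ZMod s))
    (hφ : StrictConvexOn ℚ univ φ) (hd₁ : d₁ ≠ 0)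
    (h : ((HSslopes d₁ d₂ s ν).map φ).sum = ((HSslopes d₁ d₂ s 1).map φ).sum) :
    (ν : ZMod s) = 1 := by
  simp only [sum_map_HSslopes, lam_one] at h
  exact natCast_eq_one_of_sum_map_lam_eq (Φ := fun L => ((slopeBlock d₁ d₂ L).map φ).sum) hν
    (strictConvexOn_sum_map_slopeBlock hφ hd₁) h

lemma convexOn_hinge (c : ℚ) : ConvexOn ℚ univ fun x : ℚ => max (c - x) 0 :=
  (((convexOn_id convex_univ).sup (convexOn_const 0 convex_univ)).comp_add_mul c (-1)).congr
    fun x _ => by simp [sub_eq_add_neg]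

lemma shortfall_HSslopes_le [NeZero s] (hν : IsUnit (ν : ZMod s)) (c : ℚ) :
    shortfall (HSslopes d₁ d₂ s ν) c ≤ shortfall (HSslopes d₁ d₂ s 1) c :=
  sum_map_HSslopes_le hν (convexOn_hinge c)

end HodgeStickelberger

section HodgePolygon

lemma Multiset.range_bind_map_range {α : Type*} (s d : ℕ) (f : ℕ → α) :
    ((Multiset.range s).bind fun r => (Multiset.range d).map fun m => f (s * m + r))
      = (Multiset.range (s * d)).map f := by
  induction d with
  | zero => simp
  | succ d ih =>
    simp only [Multiset.range_succ, ← Multiset.singleton_add, Multiset.map_add,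
      Multiset.map_singleton, Multiset.bind_add, Multiset.bind_singleton, ih, Nat.mul_succ,
      Multiset.range_add, Multiset.map_map, Function.comp_def]
    exact add_comm _ _

lemma Multiset.map_sub_range (s : ℕ) :
    (Multiset.range s).map (fun r => s - 1 - r) = Multiset.range s := by
  have h := List.reverse_range' (s := 0) (n := s)
  rw [zero_add, ← List.range_eq_range'] at h
  rw [Multiset.range, Multiset.map_coe, ← h, Multiset.coe_reverse]

variable {s d₁ d₂ : ℕ}

lemma lam_one_natCast {r : ℕ} (hr : r < s) : lam s 1 r = (r : ℚ) / s := by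
  have : NeZero s := ⟨by omega⟩
  rw [lam_one, ZMod.val_cast_of_lt hr]

-- The slope `(m + 1 - r/s)/d₁` is `(j + 1)/(s d₁)` for `j = s m + (s - 1 - r)`.
lemma range_bind_map_add_one_sub_lam_one (hs : s ≠ 0) :
    ((Multiset.range s).bind fun r =>
        (Multiset.range d₁).map fun m : ℕ => ((m : ℚ) + 1 - lam s 1 r) / d₁)
      = (Multiset.range (s * d₁)).map fun j : ℕ => ((j : ℚ) + 1) / (s * d₁) := by
  rw [← Multiset.range_bind_map_range]
  conv_lhs => rw [← Multiset.map_sub_range s, Multiset.bind_map]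
  refine Multiset.bind_congr fun r hr => Multiset.map_congr rfl fun m _ => ?_
  have hr : r < s := Multiset.mem_range.mp hr
  have hsQ : (s : ℚ) ≠ 0 := by exact_mod_cast hs
  rw [lam_one_natCast (by omega), Nat.cast_sub (by omega), Nat.cast_sub (by omega)]
  push_cast
  field_simp
  ring

lemma range_bind_map_add_lam_one (hs : s ≠ 0) :
    ((Multiset.range s).bind fun r =>
        (Multiset.range d₂).map fun m : ℕ => ((m : ℚ) + lam s 1 r) / d₂)
      = (Multiset.range (s * d₂)).map fun j : ℕ => (j : ℚ) / (s * d₂) := by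
  rw [← Multiset.range_bind_map_range]
  refine Multiset.bind_congr fun r hr => Multiset.map_congr rfl fun m _ => ?_
  have hsQ : (s : ℚ) ≠ 0 := by exact_mod_cast hs
  rw [lam_one_natCast (Multiset.mem_range.mp hr)]
  push_cast
  field_simp

lemma HSslopes_one (hs : s ≠ 0) (hd₁ : d₁ ≠ 0) (hd₂ : d₂ ≠ 0) :
    HSslopes d₁ d₂ s 1 = HPslopes s d₁ d₂ := by
  obtain ⟨n₁, hn₁⟩ : ∃ n, s * d₁ = n + 1 :=
    Nat.exists_eq_add_one.mpr (Nat.pos_of_ne_zero (mul_ne_zero hs hd₁))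
  obtain ⟨n₂, hn₂⟩ : ∃ n, s * d₂ = 1 + n :=
    ⟨s * d₂ - 1, by have := Nat.pos_of_ne_zero (mul_ne_zero hs hd₂); omega⟩
  have h₁ : (s : ℚ) * d₁ = n₁ + 1 := by exact_mod_cast hn₁
  have h₂ : (Multiset.range n₂).map (fun x => ((1 + x : ℕ) : ℚ) / (s * d₂))
      = (Multiset.range n₂).map fun x : ℕ => ((x : ℚ) + 1) / (s * d₂) :=
    Multiset.map_congr rfl fun x _ => by push_cast; ring
  rw [HSslopes_eq_bind]
  simp only [slopeBlock]
  rw [Multiset.bind_add, range_bind_map_add_one_sub_lam_one hs, range_bind_map_add_lam_one hs]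
  simp only [HPslopes, Multiset.pure_def, Multiset.bind_def, Multiset.bind_singleton, hn₁, hn₂,
    Nat.add_sub_cancel, Nat.add_sub_cancel_left, Multiset.range_succ, Multiset.range_add,
    Multiset.range_zero, Multiset.map_cons, Multiset.map_map, Function.comp_def,
    Multiset.map_add, h₁]
  rw [h₂, div_self (by positivity)]
  simp only [Nat.cast_zero, zero_div, Multiset.map_zero, add_zero, ← Multiset.singleton_add,
    Multiset.insert_eq_cons]
  abel

end HodgePolygon

/-- **Remark 1.4.**  Let `p` be a prime, `s ≥ 1` with `p ∤ s`, `d₁, d₂ ≥ 1`.  Then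
(i) the Hodge–Stickelberger polygon lies on or above the Hodge polygon:
`HS(k) ≥ HP(k)` for `0 ≤ k ≤ s(d₁+d₂)`;
(ii) they share endpoints: `HS(0) = HP(0) = 0` and
`HS(s(d₁+d₂)) = HP(s(d₁+d₂)) = s(d₁+d₂)/2`;
(iii) `HS(k) = HP(k)` for all `k` iff `p ≡ 1 (mod s)`. -/
theorem stmt_13 (p s d₁ d₂ : ℕ) [Fact p.Prime]
    (hs : 1 ≤ s) (hps : ¬ p ∣ s) (hd₁ : 1 ≤ d₁) (hd₂ : 1 ≤ d₂) :
    (∀ k ≤ s * (d₁ + d₂),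
        partialSum (HPslopes s d₁ d₂) k ≤ partialSum (HSslopes d₁ d₂ s (p % s)) k)
    ∧ (partialSum (HSslopes d₁ d₂ s (p % s)) 0 = 0 ∧ partialSum (HPslopes s d₁ d₂) 0 = 0)
    ∧ (partialSum (HSslopes d₁ d₂ s (p % s)) (s * (d₁ + d₂)) = ((s * (d₁ + d₂) : ℕ) : ℚ) / 2
        ∧ partialSum (HPslopes s d₁ d₂) (s * (d₁ + d₂)) = ((s * (d₁ + d₂) : ℕ) : ℚ) / 2)
    ∧ ((∀ k ≤ s * (d₁ + d₂),
          partialSum (HSslopes d₁ d₂ s (p % s)) k = partialSum (HPslopes s d₁ d₂) k)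
        ↔ p ≡ 1 [MOD s]) := by
  have : NeZero s := ⟨by omega⟩
  have hν : IsUnit ((p % s : ℕ) : ZMod s) := by
    rw [ZMod.natCast_mod]
    exact (ZMod.isUnit_iff_coprime p s).mpr ((Nat.Prime.coprime_iff_not_dvd Fact.out).mpr hps)
  have hHP : HSslopes d₁ d₂ s 1 = HPslopes s d₁ d₂ := HSslopes_one (by omega) (by omega) (by omega)
  have hcard : ∀ ν ν', Multiset.card (HSslopes d₁ d₂ s ν) = Multiset.card (HSslopes d₁ d₂ s ν') :=
    fun _ _ => card_HSslopes.trans card_HSslopes.symm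
  have hend (ν : ℕ) :
      partialSum (HSslopes d₁ d₂ s ν) (s * (d₁ + d₂)) = ((s * (d₁ + d₂) : ℕ) : ℚ) / 2 := by
    have h := partialSum_card (HSslopes d₁ d₂ s ν)
    rw [card_HSslopes] at h
    rw [h, sum_HSslopes (by omega) (by omega)]
    push_cast
    ring
  rw [← hHP]
  refine ⟨fun k hk => ?_, ⟨rfl, rfl⟩, ⟨hend _, hend 1⟩, fun h => ?_, fun h k _ => ?_⟩
  · exact partialSum_le_of_shortfall_le (hcard _ _) (shortfall_HSslopes_le hν)
      (card_HSslopes ▸ hk)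
  · have hHS := eq_of_partialSum_eq (hcard _ _) fun k hk => h k (card_HSslopes ▸ hk)
    have h₁ := natCast_eq_one_of_sum_map_HSslopes_eq hν strictConvexOn_sq (by omega)
      (congrArg (fun M => (M.map (· ^ 2)).sum) hHS)
    rw [ZMod.natCast_mod, ← Nat.cast_one] at h₁
    exact (ZMod.natCast_eq_natCast_iff p 1 s).mp h₁
  · rw [HSslopes_congr (ν' := 1)
      (by rw [ZMod.natCast_mod, (ZMod.natCast_eq_natCast_iff p 1 s).mpr h])]

end
end

section
/- Let p be a prime, a ≥ 1, q = p^a, and s ≥ 1 with s | q−1. Let 0 ≤ r ≤ s−1, let O be the orbit of r under the permutation of {0,…,s−1} given by multiplication by p modulo s, and let ℓ = |O|. Then ℓ divides a, and the sum of the base-p digits of the integer (q−1)r/s satisfies s_p((q−1)r/s) = a(p−1)·λ, where λ = (Σ_{j∈O} j)/(sℓ). Equivalently, λ = s_p((q−1)r/s)/(a(p−1)). -/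
open scoped Classical

noncomputable section

/-!
Let `m i = p ^ i * r % s` be the remainders in the long division of `r` by `s` in base `p`.
The base-`p` digits of `(q - 1) r / s = ⌊q r / s⌋` are the quotients `⌊p m i / s⌋`, `i < a`,
and `s ⌊p m i / s⌋ = p m i - m (i + 1)`. As `q ≡ 1 (mod s)` gives `m a = m 0`, summing
telescopes to `s · s_p((q - 1) r / s) = (p - 1) ∑_{i < a} m i`. Finally `m i` is the `i`-th
point of the orbit of `r` under `x ↦ p x` on `ℤ/s`; this orbit is periodic of minimal period
`ℓ ∣ a` and lists each element once per period, so `∑_{i < a} m i = (a / ℓ) ∑_{j ∈ O} j`.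
-/

open Finset Function

namespace Function

variable {α : Type*} {f : α → α} {x : α}

theorem image_range_iterate_of_minimalPeriod_le [DecidableEq α] (hx : x ∈ periodicPts f)
    {n : ℕ} (hn : minimalPeriod f x ≤ n) :
    (range n).image (f^[·] x) = (range (minimalPeriod f x)).image (f^[·] x) := by
  ext y
  simp only [mem_image, mem_range]
  constructor
  · rintro ⟨t, -, rfl⟩
    exact ⟨t % minimalPeriod f x, Nat.mod_lt _ (minimalPeriod_pos_of_mem_periodicPts hx),
      iterate_mod_minimalPeriod_eq⟩
  · rintro ⟨t, ht, rfl⟩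
    exact ⟨t, ht.trans_le hn, rfl⟩

theorem injOn_range_minimalPeriod :
    Set.InjOn (f^[·] x) (range (minimalPeriod f x) : Set ℕ) := by
  simpa only [coe_range] using iterate_injOn_Iio_minimalPeriod

theorem card_image_range_minimalPeriod [DecidableEq α] :
    ((range (minimalPeriod f x)).image (f^[·] x)).card = minimalPeriod f x := by
  rw [card_image_of_injOn injOn_range_minimalPeriod, card_range]

theorem sum_image_range_minimalPeriod [DecidableEq α] {M : Type*} [AddCommMonoid M]
    (g : α → M) :
    ∑ y ∈ (range (minimalPeriod f x)).image (f^[·] x), g y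
      = ∑ i ∈ range (minimalPeriod f x), g (f^[i] x) :=
  sum_image fun _ hi _ hj hij => injOn_range_minimalPeriod hi hj hij

theorem sum_range_minimalPeriod_mul {M : Type*} [AddCommMonoid M] (g : α → M) (k : ℕ) :
    ∑ i ∈ range (minimalPeriod f x * k), g (f^[i] x)
      = k • ∑ i ∈ range (minimalPeriod f x), g (f^[i] x) := by
  induction k with
  | zero => simp
  | succ k ih =>
    have hshift : ∀ i, f^[minimalPeriod f x * k + i] x = f^[i] x := fun i => by
      rw [add_comm, iterate_add_apply, ((isPeriodicPt_minimalPeriod f x).mul_const k).eq]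
    simp only [Nat.mul_succ, sum_range_add, ih, hshift, succ_nsmul]

end Function

theorem isPeriodicPt_natCast_mul_of_dvd {s p a : ℕ} (hp : 0 < p) (h : s ∣ p ^ a - 1)
    (r : ZMod s) : IsPeriodicPt ((p : ZMod s) * ·) a r := by
  have hpow := (ZMod.natCast_eq_zero_iff _ s).mpr h
  rw [Nat.cast_sub (Nat.one_le_pow _ _ hp), sub_eq_zero, Nat.cast_pow, Nat.cast_one] at hpow
  simp [IsPeriodicPt, IsFixedPt, hpow]

section Orbit

variable {s : ℕ} [NeZero s] {ν : ℕ} {r : ZMod s}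

theorem orb_eq_image_range_minimalPeriod (hr : r ∈ periodicPts ((ν : ZMod s) * ·)) :
    orb s ν r
      = (range (minimalPeriod ((ν : ZMod s) * ·) r)).image (((ν : ZMod s) * ·)^[·] r) := by
  rw [← image_range_iterate_of_minimalPeriod_le hr
    ((minimalPeriod_le_card.trans_eq (ZMod.card s)).trans (Nat.le_succ s))]
  simp only [orb, mul_left_iterate_apply]

theorem card_orb (hr : r ∈ periodicPts ((ν : ZMod s) * ·)) :
    (orb s ν r).card = minimalPeriod ((ν : ZMod s) * ·) r := by
  rw [orb_eq_image_range_minimalPeriod hr, card_image_range_minimalPeriod]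

theorem sum_range_val_pow_mul (hr : r ∈ periodicPts ((ν : ZMod s) * ·)) (k : ℕ) :
    ∑ i ∈ range (minimalPeriod ((ν : ZMod s) * ·) r * k), ((ν : ZMod s) ^ i * r).val
      = k * ∑ j ∈ orb s ν r, j.val := by
  rw [orb_eq_image_range_minimalPeriod hr, sum_image_range_minimalPeriod]
  simpa only [mul_left_iterate_apply, smul_eq_mul] using
    sum_range_minimalPeriod_mul (f := ((ν : ZMod s) * ·)) (x := r) ZMod.val k

end Orbit

namespace Nat

theorem digits_sum_add_mul {b c : ℕ} (hb : 1 < b) (hc : c < b) (n : ℕ) :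
    (b.digits (c + b * n)).sum = c + (b.digits n).sum := by
  by_cases h : c ≠ 0 ∨ n ≠ 0
  · rw [digits_add b hb c n hc h, List.sum_cons]
  · obtain ⟨rfl, rfl⟩ : c = 0 ∧ n = 0 := by tauto
    simp

variable {p s r : ℕ}

theorem pow_succ_mul_div (hs : 0 < s) (a : ℕ) :
    p ^ (a + 1) * r / s = p * (p ^ a * r % s) / s + p * (p ^ a * r / s) := by
  have h : p ^ (a + 1) * r = p * (p ^ a * r % s) + s * (p * (p ^ a * r / s)) := by
    conv_lhs => rw [pow_succ, mul_comm _ p, mul_assoc, ← Nat.mod_add_div (p ^ a * r) s]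
    ring
  rw [h, Nat.add_mul_div_left _ _ hs]

theorem mul_mod_div_lt (hp : 0 < p) (hs : 0 < s) (n : ℕ) : p * (n % s) / s < p :=
  Nat.div_lt_of_lt_mul <| by
    rw [mul_comm s]; exact Nat.mul_lt_mul_of_pos_left (Nat.mod_lt n hs) hp

theorem digits_sum_pow_mul_div (hp : 1 < p) (hr : r < s) (a : ℕ) :
    (p.digits (p ^ a * r / s)).sum = ∑ i ∈ range a, p * (p ^ i * r % s) / s := by
  have hs : 0 < s := by omega
  induction a with
  | zero => simp [Nat.div_eq_of_lt hr]
  | succ a ih =>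
    rw [pow_succ_mul_div hs, digits_sum_add_mul hp (mul_mod_div_lt (by omega) hs _), ih,
      sum_range_succ, add_comm]

theorem mul_sum_range_mul_mod_div {a : ℕ} (hpa : p ^ a * r ≡ r [MOD s]) :
    s * ∑ i ∈ range a, p * (p ^ i * r % s) / s = (p - 1) * ∑ i ∈ range a, p ^ i * r % s := by
  set m : ℕ → ℕ := fun i => p ^ i * r % s
  change s * ∑ i ∈ range a, p * m i / s = (p - 1) * ∑ i ∈ range a, m i
  have hstep : ∀ i, s * (p * m i / s) + m (i + 1) = p * m i := fun i => by
    change _ + p ^ (i + 1) * r % s = _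
    rw [pow_succ, mul_comm _ p, mul_assoc, ← Nat.mul_mod_mod, Nat.div_add_mod]
  have hcycle : ∑ i ∈ range a, m (i + 1) = ∑ i ∈ range a, m i := by
    have h := sum_range_succ' m a
    rw [sum_range_succ, show m a = m 0 by simpa [m, Nat.ModEq] using hpa] at h
    omega
  have htot := sum_congr rfl fun i (_ : i ∈ range a) => hstep i
  rw [sum_add_distrib, ← mul_sum, ← mul_sum, hcycle] at htot
  rw [Nat.sub_one_mul]
  omega

theorem sub_one_mul_div_of_dvd {n : ℕ} (hr : r < s) (h : s ∣ n - 1) :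
    (n - 1) * r / s = n * r / s := by
  obtain ⟨t, ht⟩ := h
  rcases n with _ | n
  · simp
  · rw [Nat.add_sub_cancel] at ht
    rw [Nat.add_sub_cancel, ht, add_one_mul, mul_assoc, Nat.mul_add_div (by omega),
      Nat.mul_div_cancel_left _ (by omega), Nat.div_eq_of_lt hr, add_zero]

theorem mul_digits_sum_sub_one_mul_div (hp : 1 < p) (hr : r < s) {a : ℕ} (h : s ∣ p ^ a - 1) :
    s * (p.digits ((p ^ a - 1) * r / s)).sum = (p - 1) * ∑ i ∈ range a, p ^ i * r % s := by
  have hpa : p ^ a * r ≡ r [MOD s] := by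
    refine ((Nat.modEq_iff_dvd' (Nat.le_mul_of_pos_left r (by positivity))).mpr ?_).symm
    rw [← Nat.sub_one_mul]
    exact h.mul_right r
  rw [sub_one_mul_div_of_dvd hr h, digits_sum_pow_mul_div hp hr]
  exact mul_sum_range_mul_mod_div hpa

end Nat

/-- **Stickelberger digit-sum formula (equation (3.5)).**
Let `p` be a prime, `q = p^a`, `s ≥ 1` with `s ∣ q-1`, and `0 ≤ r ≤ s-1`.  Let `O` be the
orbit of `r` under multiplication by `p` on `ℤ/s` and `ℓ = |O|`.  Then `ℓ ∣ a` and the sum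
of the base-`p` digits of `(q-1)r/s` satisfies `s_p((q-1)r/s) = a(p-1)·λ`, where
`λ = (∑_{j∈O} j)/(sℓ)`. -/
theorem stmt_14 (p a s r : ℕ) [Fact p.Prime]
    (ha : 1 ≤ a) (hs : 1 ≤ s) (hsq : s ∣ p ^ a - 1) (hr : r ≤ s - 1) :
    (orb s p (r : ZMod s)).card ∣ a
    ∧ ((Nat.digits p ((p ^ a - 1) * r / s)).sum : ℚ)
        = (a : ℚ) * ((p : ℚ) - 1) * lam s p (r : ZMod s) := by
  have hp := (Fact.out : p.Prime).one_lt
  have hrs : r < s := by omega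
  have : NeZero s := ⟨by omega⟩
  have hper := isPeriodicPt_natCast_mul_of_dvd (by omega) hsq (r : ZMod s)
  have hmem : (r : ZMod s) ∈ periodicPts ((p : ZMod s) * ·) := ⟨a, ha, hper⟩
  refine ⟨card_orb hmem ▸ hper.minimalPeriod_dvd, ?_⟩
  obtain ⟨k, hk⟩ := hper.minimalPeriod_dvd
  have hremainders := sum_range_val_pow_mul hmem k
  rw [← hk] at hremainders
  simp only [← Nat.cast_pow, ← Nat.cast_mul, ZMod.val_natCast] at hremainders
  have hdigits := Nat.mul_digits_sum_sub_one_mul_div hp hrs hsq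
  rw [hremainders] at hdigits
  have hℓ : (minimalPeriod ((p : ZMod s) * ·) r : ℚ) ≠ 0 := by
    exact_mod_cast (minimalPeriod_pos_of_mem_periodicPts hmem).ne'
  have hdigitsℚ := congrArg (Nat.cast (R := ℚ)) hdigits
  push_cast [Nat.cast_sub hp.le] at hdigitsℚ
  have haℚ : (a : ℚ) = minimalPeriod ((p : ZMod s) * ·) r * k := by exact_mod_cast hk
  rw [lam, card_orb hmem, haℚ]
  field_simp
  push_cast
  linear_combination hdigitsℚ

end
end

section
/- Let n ≥ 1 and l ≥ 1 be integers and c ∈ ℚ. Let D_n(x,c) ∈ ℚ[x] be the degree-n Dickson polynomial. If c ≠ 0, then there exist infinitely many primes p such that for every 1 ≤ j ≤ l the map t ↦ D_n(t, c mod p) is a bijection of 𝔽_{p^j} (i.e. D_n(x,c) is a global permutation polynomial of level l) if and only if every prime factor Q of n satisfies Q > 2l+1. If c = 0 (so D_n(x,0) = x^n for n ≥ 1), the same holds if and only if every prime factor Q of n satisfies Q > l+1. (Here p ranges over primes at which c is integral and, when c ≠ 0, c mod p ≠ 0.) -/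
/-!
Over a finite field `F` with `q` elements, every `t ∈ F` can be written as `u + c / u` with
`u ∈ 𝔽_{q²}ˣ`, and then `D_n(t, c) = uⁿ + (c / u)ⁿ`. If `gcd(n, q² - 1) = 1`, raising to the
`n`-th power is injective on `𝔽_{q²}ˣ`, so the value determines `{u, c / u}` and hence `t`.
Conversely, if an odd prime `Q` divides `n` and `q² - 1`, a primitive `Q`-th root of unity `ζ`
can be chosen so that `u + c / u` and `ζu + c / (ζu)` are distinct elements of `F` with the same
value, while for even `n` the polynomial `D_n` is even. For `c = 0` the same reasoning on `xⁿ`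
gives the condition `gcd(n, q - 1) = 1`.

Over `ℚ`, if a prime factor `Q` of `n` is at most `2l + 1` (resp. `l + 1`), Fermat's little
theorem makes the criterion fail at a level `j ≤ l` for every prime `p ≠ Q`. If all prime factors
are larger, Dirichlet's theorem yields infinitely many primes `p` that are primitive roots modulo
every prime factor `Q` of `n`; for them `Q ∤ p^k - 1` whenever `k < Q - 1`.
-/

open scoped Classical

noncomputable section

/-- `D_n(x,c)` permutes each of `𝔽_p, 𝔽_{p²}, …, 𝔽_{p^l}` (coefficients reduced mod `p`). -/
def DicksonPermutes (p : ℕ) (hp : p.Prime) (c : ℚ) (n l : ℕ) : Prop :=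
  haveI : Fact p.Prime := ⟨hp⟩
  ∀ j : ℕ, 1 ≤ j → j ≤ l →
    Function.Bijective (fun t : GaloisField p j =>
      Polynomial.eval t
        (Polynomial.dickson 1 ((c.num : GaloisField p j) * ((c.den : GaloisField p j))⁻¹) n))

open Polynomial Function

namespace Polynomial

variable {R S : Type*} [CommRing R] [CommRing S]

theorem dickson_one_mul_eval_add (x y : R) :
    ∀ n, (dickson 1 (x * y) n).eval (x + y) = x ^ n + y ^ n
  | 0 => by simp only [dickson_zero, pow_zero]; norm_num
  | 1 => by simp only [dickson_one, eval_X, pow_one]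
  | n + 2 => by
    simp only [dickson_add_two, eval_sub, eval_mul, eval_X, eval_C,
      dickson_one_mul_eval_add x y (n + 1), dickson_one_mul_eval_add x y n]
    ring

theorem apply_eval_dickson_one (f : R →+* S) {c t : R} {u v : S} (hsum : u + v = f t)
    (hprod : u * v = f c) (n : ℕ) : f ((dickson 1 c n).eval t) = u ^ n + v ^ n := by
  rw [← eval₂_at_apply, ← eval_map, map_dickson, ← hsum, ← hprod, dickson_one_mul_eval_add]

theorem dickson_one_eval_neg (a x : R) :
    ∀ n, (dickson 1 a n).eval (-x) = (-1) ^ n * (dickson 1 a n).eval x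
  | 0 => by simp
  | 1 => by simp
  | n + 2 => by
    simp only [dickson_add_two, eval_sub, eval_mul, eval_X, eval_C,
      dickson_one_eval_neg a x (n + 1), dickson_one_eval_neg a x n]
    ring

theorem dickson_one_zero_eq_X_pow : ∀ {n : ℕ}, n ≠ 0 → dickson 1 (0 : R) n = X ^ n
  | 1, _ => by rw [dickson_one, pow_one]
  | n + 2, _ => by
    rw [dickson_add_two, dickson_one_zero_eq_X_pow n.succ_ne_zero, C_0, zero_mul, sub_zero,
      pow_succ' X (n + 1)]

theorem not_injective_eval_dickson_one_of_even (h : (-1 : R) ≠ 1) (a : R) {n : ℕ}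
    (hn : Even n) : ¬ Injective fun t : R => (dickson 1 a n).eval t := fun hinj =>
  h <| hinj <| by simp only [dickson_one_eval_neg, hn.neg_one_pow, one_mul]

end Polynomial

theorem eq_of_pow_eq_of_coprime {G₀ : Type*} [CommGroupWithZero G₀] {m n : ℕ} {x y : G₀}
    (hmn : n.Coprime m) (hy : y ≠ 0) (hxm : x ^ m = 1) (hym : y ^ m = 1) (h : x ^ n = y ^ n) :
    x = y := by
  have hpow : (x / y) ^ n = 1 ∧ (x / y) ^ m = 1 := by
    rw [div_pow, div_pow, h, hxm, hym, div_self (pow_ne_zero _ hy), div_one]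
    exact ⟨rfl, rfl⟩
  exact (div_eq_one_iff_eq hy).mp ((pow_eq_one_iff_of_coprime hmn).mp hpow)

theorem not_injective_eval_dickson_one_of_pow_eq_one {F K : Type*} [Field F] [Field K]
    [Algebra F K] {c : F} {n : ℕ} {ζ u : K} (hζ : ζ ≠ 0) (hu : u ≠ 0) (hζn : ζ ^ n = 1)
    (hζ1 : ζ ≠ 1) (hne : ζ * u ^ 2 ≠ algebraMap F K c)
    (h₁ : u + algebraMap F K c / u ∈ Set.range (algebraMap F K))
    (h₂ : ζ * u + algebraMap F K c / (ζ * u) ∈ Set.range (algebraMap F K)) :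
    ¬ Injective fun t : F => (dickson 1 c n).eval t := by
  obtain ⟨t₁, ht₁⟩ := h₁
  obtain ⟨t₂, ht₂⟩ := h₂
  have hζu : ζ * u ≠ 0 := mul_ne_zero hζ hu
  intro hinj
  have heq : t₁ = t₂ := hinj <| (algebraMap F K).injective <| by
    rw [apply_eval_dickson_one _ ht₁.symm (mul_div_cancel₀ _ hu),
      apply_eval_dickson_one _ ht₂.symm (mul_div_cancel₀ _ hζu)]
    simp only [div_pow, mul_pow, hζn, one_mul]
  have h : u + algebraMap F K c / u = ζ * u + algebraMap F K c / (ζ * u) := by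
    rw [← ht₁, ← ht₂, heq]
  field_simp at h
  have hfactor : (1 - ζ) * (ζ * u ^ 2 - algebraMap F K c) = 0 := by linear_combination h
  rcases mul_eq_zero.mp hfactor with h | h
  · exact hζ1 (by linear_combination -h)
  · exact hne (sub_eq_zero.mp h)

namespace FiniteField

variable {F K : Type*} [Field F] [Fintype F] [Field K] [Algebra F K]

local notation "q" => Fintype.card F

theorem mem_range_algebraMap_of_pow_card_eq {x : K} (hx : x ^ q = x) :
    x ∈ Set.range (algebraMap F K) := by
  have hroots : (X ^ q - X : F[X]).roots.card = (X ^ q - X : F[X]).natDegree := by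
    rw [roots_X_pow_card_sub_X, X_pow_card_sub_X_natDegree_eq F Fintype.one_lt_card]
    rfl
  have hx' : x ∈ ((X ^ q - X : F[X]).map (algebraMap F K)).roots := by
    rw [mem_roots (map_ne_zero (X_pow_card_sub_X_ne_zero F Fintype.one_lt_card))]
    simp [hx]
  rw [← roots_map_of_injective_of_card_eq_natDegree (algebraMap F K).injective hroots] at hx'
  obtain ⟨a, -, ha⟩ := Multiset.mem_map.mp hx'
  exact ⟨a, ha⟩

theorem add_div_mem_range_algebraMap (c : F) {z : K} (hz : z ≠ 0)
    (hfix : z ^ q = z ∨ z ^ q * z = algebraMap F K c) :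
    z + algebraMap F K c / z ∈ Set.range (algebraMap F K) := by
  apply mem_range_algebraMap_of_pow_card_eq
  have hfrob : (z + algebraMap F K c / z) ^ q = z ^ q + algebraMap F K c / z ^ q := by
    simpa [coe_frobeniusAlgHom] using map_add (frobeniusAlgHom F K) z (algebraMap F K c / z)
  rcases hfix with h | h
  · rw [hfrob, h]
  · rw [hfrob, ← h, mul_div_cancel_left₀ _ (pow_ne_zero _ hz), mul_div_cancel_right₀ _ hz,
      add_comm]

theorem exists_pow_card_sq_eq_self_and_add_div_eq [IsAlgClosed K] (t : F) {c : F} (hc : c ≠ 0) :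
    ∃ u : K, u ≠ 0 ∧ u ^ q ^ 2 = u ∧ u + algebraMap F K c / u = algebraMap F K t := by
  set t' := algebraMap F K t
  set c' := algebraMap F K c
  obtain ⟨u, hu⟩ := IsAlgClosed.exists_root (C 1 * X ^ 2 + C (-t') * X + C c')
    (by rw [degree_quadratic one_ne_zero]; exact two_ne_zero)
  have hroot : u ^ 2 - t' * u + c' = 0 := by
    simp only [IsRoot, eval_add, eval_mul, eval_pow, eval_C, eval_X] at hu
    linear_combination hu
  have hu0 : u ≠ 0 := by
    rintro rfl
    exact hc ((algebraMap F K).injective (by rw [map_zero]; linear_combination hroot))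
  set σ := frobeniusAlgHom F K
  have hσroot : σ u ^ 2 - t' * σ u + c' = 0 := by
    simpa [t', c', AlgHom.commutes] using congrArg σ hroot
  -- `σ u` is the other root of the quadratic unless it is `u` itself.
  have hσu : σ u = u ∨ σ u = t' - u := by
    refine (mul_eq_zero.mp ?_).imp sub_eq_zero.mp sub_eq_zero.mp
    linear_combination hσroot - hroot
  refine ⟨u, hu0, ?_, by field_simp; linear_combination hroot⟩
  rw [sq, pow_mul]
  change σ (σ u) = u
  rcases hσu with h | h
  · rw [h, h]
  · rw [h, map_sub, AlgHom.commutes, h, sub_sub_cancel]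

theorem injective_eval_dickson_one_of_coprime {c : F} (hc : c ≠ 0) {n : ℕ}
    (hn : n.Coprime (q ^ 2 - 1)) : Injective fun t : F => (dickson 1 c n).eval t := by
  let K := AlgebraicClosure F
  let ι := algebraMap F K
  have hc' : ι c ≠ 0 := (map_ne_zero ι).mpr hc
  have hinj : ∀ w₁ w₂ : K, w₁ ≠ 0 → w₂ ≠ 0 → w₁ ^ q ^ 2 = w₁ → w₂ ^ q ^ 2 = w₂ →
      w₁ ^ n = w₂ ^ n → w₁ = w₂ := by
    have hroot : ∀ w : K, w ≠ 0 → w ^ q ^ 2 = w → w ^ (q ^ 2 - 1) = 1 := fun w hw h => by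
      rw [← mul_left_inj' hw, ← pow_succ, Nat.sub_one_add_one (by simp), h, one_mul]
    exact fun w₁ w₂ h₁ h₂ hq₁ hq₂ =>
      eq_of_pow_eq_of_coprime hn h₂ (hroot w₁ h₁ hq₁) (hroot w₂ h₂ hq₂)
  have hdiv : ∀ w : K, w ^ q ^ 2 = w → (ι c / w) ^ q ^ 2 = ι c / w := fun w h => by
    rw [div_pow, h, ← map_pow, pow_card_pow]
  intro t₁ t₂ h
  obtain ⟨u₁, hu₁, hq₁, ht₁⟩ := exists_pow_card_sq_eq_self_and_add_div_eq (K := K) t₁ hc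
  obtain ⟨u₂, hu₂, hq₂, ht₂⟩ := exists_pow_card_sq_eq_self_and_add_div_eq (K := K) t₂ hc
  have hsum : u₁ ^ n + (ι c / u₁) ^ n = u₂ ^ n + (ι c / u₂) ^ n := by
    rw [← apply_eval_dickson_one ι ht₁ (mul_div_cancel₀ _ hu₁),
      ← apply_eval_dickson_one ι ht₂ (mul_div_cancel₀ _ hu₂)]
    exact congrArg ι h
  have hprod : u₁ ^ n * (ι c / u₁) ^ n = u₂ ^ n * (ι c / u₂) ^ n := by
    rw [← mul_pow, ← mul_pow, mul_div_cancel₀ _ hu₁, mul_div_cancel₀ _ hu₂]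
  -- `u₁ ^ n` is a root of the quadratic with roots `u₂ ^ n` and `(c / u₂) ^ n`.
  have hcases : (u₁ ^ n - u₂ ^ n) * (u₁ ^ n - (ι c / u₂) ^ n) = 0 := by
    linear_combination u₁ ^ n * hsum - hprod
  apply ι.injective
  rw [← ht₁, ← ht₂]
  rcases mul_eq_zero.mp hcases with h | h
  · rw [hinj u₁ u₂ hu₁ hu₂ hq₁ hq₂ (sub_eq_zero.mp h)]
  · rw [hinj u₁ _ hu₁ (div_ne_zero hc' hu₂) hq₁ (hdiv u₂ hq₂) (sub_eq_zero.mp h),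
      div_div_cancel₀ hc', add_comm]

theorem natCast_ne_zero_of_dvd_card_sq_sub_one {Q : ℕ} (hQ : Q ∣ q ^ 2 - 1) : (Q : F) ≠ 0 := by
  obtain ⟨k, hk⟩ := hQ
  have hcast : ((q ^ 2 - 1 : ℕ) : F) = -1 := by
    rw [Nat.cast_sub (Nat.one_le_pow _ _ Fintype.card_pos), Nat.cast_pow, cast_card_eq_zero]
    norm_num
  intro h
  rw [hk, Nat.cast_mul, h, zero_mul] at hcast
  exact zero_ne_one (neg_eq_zero.mp hcast.symm).symm

/-- The witness is `u₀ = 1` if `Q ∣ q - 1` (then `ζ ∈ F`) and a `(q + 1)`-th root of `c` if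
`Q ∣ q + 1` (then `(ζ ^ k * u₀) ^ q = c / (ζ ^ k * u₀)`). -/
theorem exists_forall_pow_mul_add_div_mem_range [IsAlgClosed K] {c : F} (hc : c ≠ 0) {Q : ℕ}
    (hQ : Q.Prime) (hQq : Q ∣ q ^ 2 - 1) {ζ : K} (hζ : ζ ^ Q = 1) :
    ∃ u₀ : K, u₀ ≠ 0 ∧ ∀ k : ℕ,
      ζ ^ k * u₀ + algebraMap F K c / (ζ ^ k * u₀) ∈ Set.range (algebraMap F K) := by
  have hζ0 : ζ ≠ 0 := by rintro rfl; simp [zero_pow hQ.ne_zero] at hζ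
  suffices ∃ u₀ : K, u₀ ≠ 0 ∧ ∀ k : ℕ,
      (ζ ^ k * u₀) ^ q = ζ ^ k * u₀ ∨ (ζ ^ k * u₀) ^ q * (ζ ^ k * u₀) = algebraMap F K c by
    obtain ⟨u₀, hu₀, hfix⟩ := this
    exact ⟨u₀, hu₀, fun k =>
      add_div_mem_range_algebraMap c (mul_ne_zero (pow_ne_zero _ hζ0) hu₀) (hfix k)⟩
  have hζpow : ∀ m, Q ∣ m → ζ ^ m = 1 := fun m ⟨r, hr⟩ => by rw [hr, pow_mul, hζ, one_pow]
  rw [← one_pow 2, Nat.sq_sub_sq, mul_comm] at hQq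
  rcases (Nat.Prime.dvd_mul hQ).mp hQq with h | h
  · refine ⟨1, one_ne_zero, fun k => Or.inl ?_⟩
    have hζq : ζ ^ q = ζ := by
      rw [← Nat.sub_one_add_one Fintype.card_ne_zero, pow_succ, hζpow _ h, one_mul]
    rw [mul_one, ← pow_mul, mul_comm, pow_mul, hζq]
  · obtain ⟨u₀, hu₀⟩ := IsAlgClosed.exists_pow_nat_eq (algebraMap F K c) (Nat.add_one_pos q)
    refine ⟨u₀, fun h0 => (map_ne_zero (algebraMap F K)).mpr hc ?_, fun k => Or.inr ?_⟩
    · rw [← hu₀, h0, zero_pow (Nat.add_one_ne_zero q)]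
    · rw [← pow_succ, mul_pow, ← pow_mul, mul_comm k, pow_mul, hζpow _ h, one_pow, one_mul, hu₀]

theorem not_injective_eval_dickson_one_of_dvd {c : F} (hc : c ≠ 0) {n Q : ℕ} (hQ : Q.Prime)
    (hQ2 : Q ≠ 2) (hQn : Q ∣ n) (hQq : Q ∣ q ^ 2 - 1) :
    ¬ Injective fun t : F => (dickson 1 c n).eval t := by
  let K := AlgebraicClosure F
  let ι := algebraMap F K
  have : NeZero (Q : K) :=
    ⟨by simpa [ι] using (map_ne_zero ι).mpr (natCast_ne_zero_of_dvd_card_sq_sub_one hQq)⟩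
  obtain ⟨ζ, hζ⟩ := HasEnoughRootsOfUnity.exists_primitiveRoot K Q
  have hζ0 : ζ ≠ 0 := hζ.ne_zero hQ.ne_zero
  have hζn : ζ ^ n = 1 := (hζ.pow_eq_one_iff_dvd n).mpr hQn
  have hζ1 : ζ ≠ 1 := hζ.ne_one hQ.one_lt
  have hζ2 : ζ ^ 2 ≠ 1 := fun h =>
    hQ2 ((Nat.prime_dvd_prime_iff_eq hQ Nat.prime_two).mp ((hζ.pow_eq_one_iff_dvd 2).mp h))
  obtain ⟨u₀, hu₀, hrange⟩ := exists_forall_pow_mul_add_div_mem_range hc hQ hQq hζ.pow_eq_one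
  -- One of `u₀`, `ζ * u₀` is not a square root of `c / ζ`, since `ζ ^ 2 ≠ 1`.
  by_cases hsq : ζ * u₀ ^ 2 = ι c
  · refine not_injective_eval_dickson_one_of_pow_eq_one hζ0 (mul_ne_zero hζ0 hu₀) hζn hζ1 ?_
      (by simpa using hrange 1) (by simpa [← mul_assoc, ← sq] using hrange 2)
    intro h
    apply hζ2
    apply mul_right_cancel₀ ((map_ne_zero ι).mpr hc)
    linear_combination h - ζ ^ 2 * hsq
  · exact not_injective_eval_dickson_one_of_pow_eq_one hζ0 hu₀ hζn hζ1 hsq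
      (by simpa using hrange 0) (by simpa using hrange 1)

theorem injective_pow_iff_coprime {n : ℕ} (hn : n ≠ 0) :
    Injective (fun t : F => t ^ n) ↔ n.Coprime (q - 1) := by
  refine ⟨fun hinj => ?_, fun hcop x y h => ?_⟩
  · by_contra hcop
    obtain ⟨Q, hQ, hQn, hQq⟩ := Nat.Prime.not_coprime_iff_dvd.mp hcop
    have := Fact.mk hQ
    obtain ⟨g, hg⟩ := exists_prime_orderOf_dvd_card (G := Fˣ) Q (by rwa [Fintype.card_units])
    have hgn : (g : F) ^ n = 1 ^ n := by
      rw [← Units.val_pow_eq_pow_val, orderOf_dvd_iff_pow_eq_one.mp (hg ▸ hQn), Units.val_one,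
        one_pow]
    have hg1 : g = 1 := Units.ext (hinj hgn)
    exact hQ.one_lt.ne (by rw [← hg, hg1, orderOf_one])
  · rcases eq_or_ne y 0 with rfl | hy
    · exact (pow_eq_zero_iff hn).mp (h.trans (zero_pow hn))
    have hx : x ≠ 0 := by
      rintro rfl
      exact hy ((pow_eq_zero_iff hn).mp ((zero_pow hn).symm.trans h).symm)
    exact eq_of_pow_eq_of_coprime hcop hy (pow_card_sub_one_eq_one x hx)
      (pow_card_sub_one_eq_one y hy) h

theorem injective_eval_dickson_one_iff_coprime {c : F} (hc : c ≠ 0) {n : ℕ} :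
    Injective (fun t : F => (dickson 1 c n).eval t) ↔ n.Coprime (q ^ 2 - 1) := by
  refine ⟨fun hinj => ?_, injective_eval_dickson_one_of_coprime hc⟩
  by_contra hcop
  obtain ⟨Q, hQ, hQn, hQq⟩ := Nat.Prime.not_coprime_iff_dvd.mp hcop
  rcases eq_or_ne Q 2 with rfl | hQ2
  · have h2 : (2 : F) ≠ 0 := by exact_mod_cast natCast_ne_zero_of_dvd_card_sq_sub_one hQq
    refine not_injective_eval_dickson_one_of_even (fun h => h2 ?_) c (even_iff_two_dvd.mpr hQn)
      hinj
    linear_combination -h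
  · exact not_injective_eval_dickson_one_of_dvd hc hQ hQ2 hQn hQq hinj

end FiniteField

namespace Nat

theorem infinite_setOf_prime_coprime_pow_sub_one {n b : ℕ} (hn : n ≠ 0)
    (hb : ∀ Q, Q.Prime → Q ∣ n → b + 1 < Q) :
    {p | p.Prime ∧ ∀ k, 1 ≤ k → k ≤ b → n.Coprime (p ^ k - 1)}.Infinite := by
  have hgen : ∀ Q : n.primeFactors, ∃ g : ZMod Q, IsUnit g ∧ orderOf g = Q - 1 := by
    rintro ⟨Q, hQ⟩
    have := Fact.mk (prime_of_mem_primeFactors hQ)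
    obtain ⟨g, hg⟩ := IsCyclic.exists_ofOrder_eq_natCard (α := (ZMod Q)ˣ)
    exact ⟨g, g.isUnit, by rw [orderOf_units, hg, Nat.card_units, Nat.card_zmod]⟩
  choose g hgunit hg using hgen
  have hcop : Pairwise (Coprime on fun Q : n.primeFactors => (Q : ℕ)) := fun Q R h =>
    (coprime_primes (prime_of_mem_primeFactors Q.2) (prime_of_mem_primeFactors R.2)).mpr
      (Subtype.coe_ne_coe.mpr h)
  -- By the Chinese remainder theorem, some residue is a primitive root modulo every `Q ∣ n`.
  let crt := ZMod.prodEquivPi _ hcop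
  have : NeZero (∏ Q : n.primeFactors, (Q : ℕ)) :=
    ⟨Finset.prod_ne_zero_iff.mpr fun Q _ => (prime_of_mem_primeFactors Q.2).ne_zero⟩
  have hunit : IsUnit (crt.symm g) := (isUnit_map_iff crt.symm g).mpr (Pi.isUnit_iff.mpr hgunit)
  refine (infinite_setOfPred_prime_and_eq_mod hunit).mono ?_
  rintro p ⟨hp, hpg⟩
  refine ⟨hp, fun k hk1 hkb => coprime_of_dvd fun Q hQ hQn hQp => ?_⟩
  have hQ' : Q ∈ n.primeFactors := mem_primeFactors.mpr ⟨hQ, hQn, hn⟩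
  have hpQ : (p : ZMod Q) = g ⟨Q, hQ'⟩ := by
    have h := congrFun (congrArg crt hpg) ⟨Q, hQ'⟩
    rwa [map_natCast, RingEquiv.apply_symm_apply, Pi.natCast_apply] at h
  have hord : orderOf (g ⟨Q, hQ'⟩) = Q - 1 := hg _
  have hpow : (p : ZMod Q) ^ k = 1 := by
    have h := (ZMod.natCast_eq_zero_iff _ _).mpr hQp
    rwa [cast_sub (one_le_pow _ _ hp.pos), cast_pow, cast_one, sub_eq_zero] at h
  have hdvd := orderOf_dvd_of_pow_eq_one hpow
  rw [hpQ, hord] at hdvd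
  have := le_of_dvd (by omega) hdvd
  have := hb Q hQ hQn
  omega

theorem infinite_setOf_prime_coprime_pow_mul_sub_one_iff {n e l : ℕ} (hn : n ≠ 0)
    (he : e = 1 ∨ e = 2) :
    {p | p.Prime ∧ ∀ j, 1 ≤ j → j ≤ l → n.Coprime (p ^ (e * j) - 1)}.Infinite ↔
      ∀ Q, Q.Prime → Q ∣ n → e * l + 1 < Q := by
  refine ⟨fun hinf Q hQ hQn => ?_, fun hb => ?_⟩
  · by_contra! hle
    obtain ⟨p, ⟨hp, hcop⟩, hpQ⟩ := hinf.exists_gt Q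
    have hQp : p.Coprime Q := (coprime_primes hp hQ).mpr hpQ.ne'
    obtain ⟨j, hj1, hjl, hdvd⟩ : ∃ j, 1 ≤ j ∧ j ≤ l ∧ Q - 1 ∣ e * j := by
      rcases he with rfl | rfl
      · exact ⟨Q - 1, by have := hQ.two_le; omega, by omega, by simp⟩
      · refine ⟨Q / 2, by have := hQ.two_le; omega, by omega, ?_⟩
        rcases hQ.eq_two_or_odd' with rfl | ⟨m, rfl⟩
        · simp
        · exact ⟨1, by omega⟩
    -- Fermat: `Q ∣ p ^ (Q - 1) - 1 ∣ p ^ (e * j) - 1`.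
    have hQdvd : Q ∣ p ^ (e * j) - 1 :=
      (dvd_of_mod_eq_zero (pow_card_sub_one_sub_one_mod_card hQ hQp)).trans
        (pow_sub_one_dvd_pow_sub_one p hdvd)
    exact not_coprime_of_dvd_of_dvd hQ.one_lt hQn hQdvd (hcop j hj1 hjl)
  · refine (infinite_setOf_prime_coprime_pow_sub_one hn hb).mono ?_
    rintro p ⟨hp, hcop⟩
    exact ⟨hp, fun j hj1 hjl => hcop _ (by rcases he with rfl | rfl <;> omega)
      (Nat.mul_le_mul_left e hjl)⟩

end Nat

theorem dicksonPermutes_iff {p : ℕ} (hp : p.Prime) {c : ℚ} (hden : ¬ p ∣ c.den)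
    (hnum : c ≠ 0 → ¬ (p : ℤ) ∣ c.num) {n : ℕ} (hn : n ≠ 0) (l : ℕ) :
    DicksonPermutes p hp c n l ↔
      ∀ j, 1 ≤ j → j ≤ l → n.Coprime (p ^ ((if c = 0 then 1 else 2) * j) - 1) := by
  have := Fact.mk hp
  refine forall_congr' fun j => forall_congr' fun hj => imp_congr_right fun _ => ?_
  let _ : Fintype (GaloisField p j) := Fintype.ofFinite _
  have hcard : Fintype.card (GaloisField p j) = p ^ j := by
    rw [← Nat.card_eq_fintype_card, GaloisField.card p j (by omega)]
  rw [← Finite.injective_iff_bijective]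
  split_ifs with hc
  · simp only [hc, Rat.num_zero, Int.cast_zero, zero_mul, dickson_one_zero_eq_X_pow hn, eval_pow,
      eval_X, one_mul]
    rw [FiniteField.injective_pow_iff_coprime hn, hcard]
  · have hc' : (c.num : GaloisField p j) * (c.den : GaloisField p j)⁻¹ ≠ 0 :=
      mul_ne_zero (by rw [Ne, CharP.intCast_eq_zero_iff _ p]; exact hnum hc)
        (inv_ne_zero (by rwa [Ne, CharP.cast_eq_zero_iff _ p]))
    rw [FiniteField.injective_eval_dickson_one_iff_coprime hc', hcard, ← pow_mul, mul_comm]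

theorem stmt_17_general (n l : ℕ) (hn : 1 ≤ n) (c : ℚ) :
    {p : ℕ | ∃ hp : p.Prime,
        ¬ p ∣ c.den ∧ (c ≠ 0 → ¬ ((p : ℤ) ∣ c.num)) ∧ DicksonPermutes p hp c n l}.Infinite
      ↔ ∀ Q : ℕ, Q.Prime → Q ∣ n → (if c = 0 then l + 1 else 2 * l + 1) < Q := by
  have he : (if c = 0 then 1 else 2) = 1 ∨ (if c = 0 then 1 else 2) = 2 := by
    split_ifs <;> simp
  have hbound : (if c = 0 then l + 1 else 2 * l + 1) = (if c = 0 then 1 else 2) * l + 1 := by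
    split_ifs <;> ring
  rw [hbound, ← Nat.infinite_setOf_prime_coprime_pow_mul_sub_one_iff (by omega) he]
  refine ⟨fun h => h.mono ?_, fun h => (h.sdiff (Set.finite_Iic (c.den + c.num.natAbs))).mono ?_⟩
  · rintro p ⟨hp, hden, hnum, hperm⟩
    exact ⟨hp, (dicksonPermutes_iff hp hden hnum (by omega) l).mp hperm⟩
  · rintro p ⟨⟨hp, hcop⟩, hpc⟩
    simp only [Set.mem_Iic, not_le] at hpc
    have hden : ¬ p ∣ c.den := fun h => by have := Nat.le_of_dvd c.den_pos h; omega
    have hnum : c ≠ 0 → ¬ (p : ℤ) ∣ c.num := fun hc h => by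
      have := Nat.le_of_dvd (Int.natAbs_pos.mpr (Rat.num_ne_zero.mpr hc)) (Int.natCast_dvd.mp h)
      omega
    exact ⟨hp, hden, hnum, (dicksonPermutes_iff hp hden hnum (by omega) l).mpr hcop⟩

/-- **Global permutation criterion for Dickson polynomials.**
Let `n, l ≥ 1` and `c ∈ ℚ`, and let `D_n(x,c)` be the degree-`n` Dickson polynomial of the
first kind.  There are infinitely many primes `p` (at which `c` is integral, and with
`c mod p ≠ 0` whenever `c ≠ 0`) such that `t ↦ D_n(t, c mod p)` is a bijection of `𝔽_{p^j}`
for every `1 ≤ j ≤ l`, if and only if every prime factor `Q` of `n` satisfies `Q > 2l+1`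
(when `c ≠ 0`), resp. `Q > l+1` (when `c = 0`). -/
theorem stmt_17 (n l : ℕ) (hn : 1 ≤ n) (hl : 1 ≤ l) (c : ℚ) :
    {p : ℕ | ∃ hp : p.Prime,
        ¬ p ∣ c.den ∧ (c ≠ 0 → ¬ ((p : ℤ) ∣ c.num)) ∧ DicksonPermutes p hp c n l}.Infinite
      ↔ ∀ Q : ℕ, Q.Prime → Q ∣ n → (if c = 0 then l + 1 else 2 * l + 1) < Q :=
  stmt_17_general n l hn c
end
end
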